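/- arXiv:2106.08567 — 12 statements merged into one kernel-verified Lean document; each statement's English description precedes it below -/
import Mathlib

section
/- Characterization of hockey-stick divergence curves: for a function H : ℝ_{≥0} → ℝ, there exist probability measures P and Q on some measurable space such that H(α) = H_α(P‖Q) for all α ≥ 0 if and only if H is convex, nonincreasing, H(0) = 1, and H(α) ≥ (1 − α)₊ for all α ≥ 0 (where (x)₊ = max{x,0}). -/
open MeasureTheory

/-- The hockey-stick divergence `H_α(P‖Q) = ∫ (p − α·q)₊ dμ` with `μ = P + Q`. -/
noncomputable def hockeyStick {Ω : Type*} [MeasurableSpace Ω] (α : ℝ) (P Q : Measure Ω) : ℝ :=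
  ∫ ω, max ((P.rnDeriv (P + Q) ω).toReal - α * (Q.rnDeriv (P + Q) ω).toReal) 0 ∂(P + Q)

/-!
Necessity: pointwise, `α ↦ (p - α q)₊` is convex and nonincreasing, it equals `p` at `α = 0`,
and it dominates `p - α q`, whose integral is `1 - α`.

Sufficiency: extend `H` by `1 - α` to `α < 0` (the value of every hockey-stick divergence
there). The extension `G` is convex on `ℝ`, so its right derivative `D` is nondecreasing, equal to
`-1` on `(-∞, 0)`, and tends to `0` at `+∞`; thus `D + 1` is the distribution function of a
probability measure `ν` on `[0, ∞)`, and with `l = lim H`,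
`∫ (t - α)₊ dν = ∫_α^∞ ν (t > x) dx = ∫_α^∞ -D = H α - l`.
Taking `ν` as the law of the likelihood ratio `dP/dQ` under `Q` and putting the remaining mass `l`
of `P` on a `Q`-null atom gives `H_α(P‖Q) = ∫ (t - α)₊ dν + l = H α`.
-/

open Set Filter Topology Function
open scoped ENNReal NNReal

theorem convexOn_integral {Ω E : Type*} [MeasurableSpace Ω] [AddCommMonoid E] [Module ℝ E]
    {μ : Measure Ω} {s : Set E} {F : E → Ω → ℝ} (hs : Convex ℝ s)
    (hF : ∀ ω, ConvexOn ℝ s (F · ω)) (hint : ∀ x ∈ s, Integrable (F x) μ) :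
    ConvexOn ℝ s fun x => ∫ ω, F x ω ∂μ := by
  refine ⟨hs, fun x hx y hy a b ha hb hab => ?_⟩
  calc ∫ ω, F (a • x + b • y) ω ∂μ ≤ ∫ ω, a • F x ω + b • F y ω ∂μ :=
        integral_mono (hint _ (hs hx hy ha hb hab))
          (((hint x hx).smul a).add ((hint y hy).smul b)) fun ω => (hF ω).2 hx hy ha hb hab
    _ = a • ∫ ω, F x ω ∂μ + b • ∫ ω, F y ω ∂μ := by
        simp only [smul_eq_mul]
        rw [integral_add ((hint x hx).const_mul a) ((hint y hy).const_mul b), integral_const_mul,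
          integral_const_mul]

theorem convexOn_max_sub_mul_zero (p q : ℝ) :
    ConvexOn ℝ univ fun α : ℝ => max (p - α * q) 0 :=
  ((convexOn_const p convex_univ).sub ((LinearMap.mulRight ℝ q).concaveOn convex_univ)).sup
    (convexOn_const 0 convex_univ)

section HockeyStick

variable {Ω : Type*} [MeasurableSpace Ω] {P Q : Measure Ω} [IsFiniteMeasure P]
  [IsFiniteMeasure Q]

theorem integrable_hockeyStick_integrand (α : ℝ) :
    Integrable (fun ω => max ((P.rnDeriv (P + Q) ω).toReal - α * (Q.rnDeriv (P + Q) ω).toReal) 0)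
      (P + Q) :=
  (Measure.integrable_toReal_rnDeriv.sub (Measure.integrable_toReal_rnDeriv.const_mul α)).pos_part

theorem convexOn_hockeyStick : ConvexOn ℝ univ fun α => hockeyStick α P Q :=
  convexOn_integral convex_univ (fun _ => convexOn_max_sub_mul_zero _ _)
    fun α _ => integrable_hockeyStick_integrand α

theorem antitone_hockeyStick : Antitone fun α => hockeyStick α P Q := fun a b hab =>
  integral_mono (integrable_hockeyStick_integrand b) (integrable_hockeyStick_integrand a) fun _ =>
    max_le_max_right 0 (by gcongr)

theorem hockeyStick_zero : hockeyStick 0 P Q = P.real univ := by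
  simp only [hockeyStick, zero_mul, sub_zero, max_eq_left ENNReal.toReal_nonneg]
  exact Measure.integral_toReal_rnDeriv (Measure.AbsolutelyContinuous.rfl.add_right Q)

theorem sub_le_hockeyStick (α : ℝ) : P.real univ - α * Q.real univ ≤ hockeyStick α P Q := by
  rw [← Measure.integral_toReal_rnDeriv (Measure.AbsolutelyContinuous.rfl.add_right Q),
    ← Measure.integral_toReal_rnDeriv (Measure.AbsolutelyContinuous.rfl.add_right' P),
    ← integral_const_mul, ← integral_sub Measure.integrable_toReal_rnDeriv
      (Measure.integrable_toReal_rnDeriv.const_mul α)]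
  exact integral_mono (Measure.integrable_toReal_rnDeriv.sub
    (Measure.integrable_toReal_rnDeriv.const_mul α)) (integrable_hockeyStick_integrand α)
    fun _ => le_max_left _ _

end HockeyStick

theorem ConvexOn.convexOn_univ_ite {f : ℝ → ℝ} {a c : ℝ} (hf : ConvexOn ℝ (Ici a) f)
    (hc : ∀ x, a ≤ x → f a + c * (x - a) ≤ f x) :
    ConvexOn ℝ univ fun x => if a ≤ x then f x else f a + c * (x - a) := by
  refine convexOn_of_slope_mono_adjacent convex_univ fun {x y z} _ _ hxy hyz => ?_
  -- left of `a` every slope equals `c`; right of `a` every slope is at least `c` (`hslope`)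
  have hadj : ∀ {u v}, a ≤ u → u < v → (f u - f a) * (v - u) ≤ (f v - f u) * (u - a) := by
    intro u v hu huv
    rcases hu.eq_or_lt with rfl | hu
    · simp
    · rw [← div_le_div_iff₀ (by linarith) (by linarith)]
      exact hf.slope_mono_adjacent self_mem_Ici (mem_Ici.2 (by linarith)) hu huv
  have hslope : ∀ {u v}, a ≤ u → u < v → c * (v - u) ≤ f v - f u := fun {u v} hu huv => by
    nlinarith [hadj hu huv,
      mul_le_mul_of_nonneg_right (hc v (by linarith)) (by linarith : 0 ≤ v - u)]
  rw [div_le_div_iff₀ (by linarith) (by linarith)]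
  by_cases hy : a ≤ y
  · have hz : a ≤ z := by linarith
    by_cases hx : a ≤ x
    · simp only [if_pos hx, if_pos hy, if_pos hz]
      rw [← div_le_div_iff₀ (by linarith) (by linarith)]
      exact hf.slope_mono_adjacent hx hz hxy hyz
    · simp only [if_neg hx, if_pos hy, if_pos hz]
      nlinarith [hadj hy hyz, mul_le_mul_of_nonneg_left (hslope hy hyz)
        (by linarith : 0 ≤ a - x)]
  · simp only [if_neg hy, if_neg (show ¬ a ≤ x by linarith)]
    split_ifs with hz
    · nlinarith [hc z hz]
    · nlinarith

theorem AntitoneOn.exists_tendsto_atTop {f : ℝ → ℝ} {a b : ℝ} (hf : AntitoneOn f (Ici a))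
    (hb : ∀ x, a ≤ x → b ≤ f x) :
    ∃ l, b ≤ l ∧ (∀ x, a ≤ x → l ≤ f x) ∧ Tendsto f atTop (𝓝 l) := by
  have hanti : Antitone fun x => f (max x a) := fun x y hxy =>
    hf (le_max_right x a) (le_max_right y a) (max_le_max_right a hxy)
  have hbdd : BddBelow (range fun x => f (max x a)) := ⟨b, by
    rintro _ ⟨x, rfl⟩; exact hb _ (le_max_right x a)⟩
  refine ⟨_, le_ciInf fun x => hb _ (le_max_right x a),
    fun x hx => (ciInf_le hbdd x).trans_eq (by rw [max_eq_left hx]),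
    (tendsto_atTop_ciInf hanti hbdd).congr' ?_⟩
  filter_upwards [eventually_ge_atTop a] with x hx
  rw [max_eq_left hx]

namespace ConvexOn

variable {G : ℝ → ℝ} {l : ℝ}

theorem monotone_rightDeriv (hG : ConvexOn ℝ univ G) :
    Monotone fun x => derivWithin G (Ioi x) x := by
  simpa using hG.monotoneOn_rightDeriv

theorem integral_rightDeriv (hG : ConvexOn ℝ univ G) {a b : ℝ} (hab : a ≤ b) :
    ∫ x in a..b, derivWithin G (Ioi x) x = G b - G a :=
  intervalIntegral.integral_eq_sub_of_hasDeriv_right_of_le hab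
    ((hG.continuousOn isOpen_univ).mono (subset_univ _))
    (fun _ _ => hG.hasDerivWithinAt_rightDeriv_of_mem_interior (by simp))
    (hG.monotone_rightDeriv.intervalIntegrable)

theorem tendsto_rightDeriv_atTop (hG : ConvexOn ℝ univ G) (hl : Tendsto G atTop (𝓝 l)) :
    Tendsto (fun x => derivWithin G (Ioi x) x) atTop (𝓝 0) := by
  have hdiff : ∀ c, Tendsto (fun x => G (x + c) - G x) atTop (𝓝 0) := fun c => by
    simpa using (hl.comp (tendsto_atTop_add_const_right atTop c tendsto_id)).sub hl
  refine tendsto_of_tendsto_of_tendsto_of_le_of_le (g := fun x => G x - G (x - 1))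
    (by simpa [← sub_eq_add_neg] using (hdiff (-1)).neg) (hdiff 1) (fun x => ?_) fun x => ?_
  · have h := (hG.slope_le_leftDeriv_of_mem_interior (mem_univ (x - 1)) (by simp)
      (sub_one_lt x)).trans (hG.leftDeriv_le_rightDeriv_of_mem_interior (by simp))
    simpa [slope_def_field] using h
  · have h := hG.rightDeriv_le_slope_of_mem_interior (by simp) (mem_univ (x + 1)) (lt_add_one x)
    simpa [slope_def_field] using h

theorem rightDeriv_nonpos (hG : ConvexOn ℝ univ G) (hl : Tendsto G atTop (𝓝 l)) (x : ℝ) :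
    derivWithin G (Ioi x) x ≤ 0 :=
  hG.monotone_rightDeriv.ge_of_tendsto (hG.tendsto_rightDeriv_atTop hl) x

theorem lintegral_Ioi_neg_rightDeriv (hG : ConvexOn ℝ univ G) (hl : Tendsto G atTop (𝓝 l))
    (a : ℝ) :
    ∫⁻ x in Ioi a, ENNReal.ofReal (-derivWithin G (Ioi x) x) = ENNReal.ofReal (G a - l) := by
  refine (aecover_Iic tendsto_id).lintegral_eq_of_tendsto _
    (hG.monotone_rightDeriv.measurable.neg.ennreal_ofReal.aemeasurable) ?_
  refine (ENNReal.tendsto_ofReal (tendsto_const_nhds.sub hl)).congr' ?_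
  filter_upwards [eventually_ge_atTop a] with b hab
  rw [Measure.restrict_restrict measurableSet_Iic, Iic_inter_Ioi, id, ← neg_sub,
    ← hG.integral_rightDeriv hab, intervalIntegral.integral_of_le hab, ← integral_neg,
    ofReal_integral_eq_lintegral_ofReal]
  · exact (hG.monotone_rightDeriv.intervalIntegrable.1).neg
  · exact ae_of_all _ fun x => neg_nonneg.2 (hG.rightDeriv_nonpos hl x)

end ConvexOn

theorem Monotone.ae_rightLim_eq {f : ℝ → ℝ} (hf : Monotone f) {μ : Measure ℝ}
    [NullSingletonClass μ] :
    ∀ᵐ x ∂μ, rightLim f x = f x := by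
  refine measure_mono_null (fun x (hx : rightLim f x ≠ f x) (hcont : ContinuousAt f x) => hx ?_)
    (hf.countable_not_continuousAt.measure_zero μ)
  exact rightLim_eq_of_tendsto (hcont.tendsto.mono_left nhdsWithin_le_nhds)

theorem Monotone.ae_measure_stieltjesFunction_Ioi {D : ℝ → ℝ} (hD : Monotone D)
    (htop : Tendsto D atTop (𝓝 0)) :
    ∀ᵐ x, hD.stieltjesFunction.measure (Ioi x) = ENNReal.ofReal (-D x) := by
  filter_upwards [hD.ae_rightLim_eq] with x hx
  rw [StieltjesFunction.measure_Ioi _ (tendsto_rightLim_atTop_of_tendsto htop),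
    hD.stieltjesFunction_eq, hx, zero_sub]

theorem Monotone.isProbabilityMeasure_stieltjesFunction {D : ℝ → ℝ} (hD : Monotone D)
    (hbot : Tendsto D atBot (𝓝 (-1))) (htop : Tendsto D atTop (𝓝 0)) :
    IsProbabilityMeasure hD.stieltjesFunction.measure :=
  ⟨by rw [StieltjesFunction.measure_univ _ (tendsto_rightLim_atBot_of_tendsto hbot)
    (tendsto_rightLim_atTop_of_tendsto htop)]; norm_num⟩

theorem lintegral_ofReal_sub_eq_lintegral_Ioi (ν : Measure ℝ) (α : ℝ) :
    ∫⁻ t, ENNReal.ofReal (t - α) ∂ν = ∫⁻ x in Ioi α, ν (Ioi x) := by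
  have hlayer := lintegral_eq_lintegral_meas_lt ν (f := fun t => max (t - α) 0)
    (ae_of_all _ fun _ => le_max_right _ _) (by fun_prop)
  have hsets : ∀ u ∈ Ioi (0 : ℝ), ν {t | u < max (t - α) 0} = ν (Ioi (α + u)) := by
    intro u (hu : 0 < u)
    congr 1
    ext t
    simp only [mem_ofPred_eq, lt_max_iff, mem_Ioi, not_lt_of_gt hu, or_false]
    constructor <;> intro h <;> linarith
  simp only [ENNReal.ofReal_max, ENNReal.ofReal_zero, max_eq_left (zero_le : (0 : ℝ≥0∞) ≤ _)]
    at hlayer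
  rw [hlayer, setLIntegral_congr_fun measurableSet_Ioi hsets]
  simpa using (measurePreserving_add_left volume α).setLIntegral_comp_preimage_emb
    (measurableEmbedding_addLeft α) (fun x => ν (Ioi x)) (Ioi α)

theorem ConvexOn.exists_lintegral_ofReal_sub_eq {G : ℝ → ℝ} {l : ℝ} (hG : ConvexOn ℝ univ G)
    (hleft : ∀ x ≤ 0, G x = G 0 - x) (hl : Tendsto G atTop (𝓝 l)) :
    ∃ ν : Measure ℝ, IsProbabilityMeasure ν ∧ (∀ᵐ t ∂ν, 0 ≤ t) ∧
      ∀ α, ∫⁻ t, ENNReal.ofReal (t - α) ∂ν = ENNReal.ofReal (G α - l) := by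
  set D := fun x => derivWithin G (Ioi x) x
  have hD : Monotone D := hG.monotone_rightDeriv
  have hD_neg : ∀ x < 0, D x = -1 := fun x hx =>
    (((hasDerivAt_id x).const_sub (G 0)).congr_of_eventuallyEq
      (eventually_of_mem (Iio_mem_nhds hx) fun y hy => hleft y hy.le)).hasDerivWithinAt.derivWithin
      (uniqueDiffWithinAt_Ioi x)
  have hbot : Tendsto D atBot (𝓝 (-1)) :=
    tendsto_const_nhds.congr' (by
      filter_upwards [eventually_lt_atBot 0] with x hx using (hD_neg x hx).symm)
  have hf_neg : ∀ x < 0, hD.stieltjesFunction x = -1 := fun x hx => by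
    rw [hD.stieltjesFunction_eq]
    exact le_antisymm
      ((hD.rightLim_le (by linarith : x < x / 2)).trans_eq (hD_neg _ (by linarith)))
      ((hD_neg x hx).symm.trans_le (hD.le_rightLim le_rfl))
  have htop := hG.tendsto_rightDeriv_atTop hl
  refine ⟨hD.stieltjesFunction.measure, hD.isProbabilityMeasure_stieltjesFunction hbot htop, ?_,
    fun α => ?_⟩
  · have hleftLim : leftLim hD.stieltjesFunction 0 = -1 :=
      leftLim_eq_of_tendsto (tendsto_const_nhds.congr' (eventually_nhdsWithin_of_forall
        fun x (hx : x < 0) => (hf_neg x hx).symm))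
    rw [ae_iff]
    simpa [hleftLim, ← Iio_def] using
      hD.stieltjesFunction.measure_Iio (tendsto_rightLim_atBot_of_tendsto hbot) 0
  · rw [lintegral_ofReal_sub_eq_lintegral_Ioi, ← hG.lintegral_Ioi_neg_rightDeriv hl]
    exact lintegral_congr_ae (ae_restrict_of_ae (hD.ae_measure_stieltjesFunction_Ioi htop))

theorem hockeyStick_withDensity {Ω : Type*} [MeasurableSpace Ω] (μ : Measure Ω) [SigmaFinite μ]
    {p q : Ω → ℝ} (hp : Measurable p) (hq : Measurable q) (hp0 : ∀ ω, 0 ≤ p ω)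
    (hq0 : ∀ ω, 0 ≤ q ω) (hpq : ∀ ω, p ω + q ω = 1) (α : ℝ) :
    hockeyStick α (μ.withDensity fun ω => ENNReal.ofReal (p ω))
      (μ.withDensity fun ω => ENNReal.ofReal (q ω)) =
      (∫⁻ ω, ENNReal.ofReal (p ω - α * q ω) ∂μ).toReal := by
  have hsum : (μ.withDensity fun ω => ENNReal.ofReal (p ω)) +
      μ.withDensity (fun ω => ENNReal.ofReal (q ω)) = μ := by
    rw [← withDensity_add_left hp.ennreal_ofReal]
    convert withDensity_one (μ := μ)
    ext ω
    simp [← ENNReal.ofReal_add (hp0 ω) (hq0 ω), hpq]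
  rw [hockeyStick, hsum, integral_congr_ae (g := fun ω => max (p ω - α * q ω) 0),
    integral_eq_lintegral_of_nonneg_ae (f := fun ω => max (p ω - α * q ω) 0)
      (ae_of_all _ fun _ => le_max_right _ _) (by fun_prop)]
  · simp [ENNReal.ofReal_max]
  filter_upwards [μ.rnDeriv_withDensity hp.ennreal_ofReal,
    μ.rnDeriv_withDensity hq.ennreal_ofReal] with ω hpω hqω
  rw [hpω, hqω, ENNReal.toReal_ofReal (hp0 ω), ENNReal.toReal_ofReal (hq0 ω)]

theorem exists_hockeyStick_eq_lintegral (ν : Measure ℝ) [IsProbabilityMeasure ν]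
    (hν : ∀ᵐ t ∂ν, 0 ≤ t) (s : ℝ≥0) (hmass : ∫⁻ t, ENNReal.ofReal t ∂ν + s = 1) :
    ∃ P Q : Measure ℝ, IsProbabilityMeasure P ∧ IsProbabilityMeasure Q ∧
      ∀ α, hockeyStick α P Q = (∫⁻ t, ENNReal.ofReal (t - α) ∂ν + s).toReal := by
  -- `t` plays the likelihood ratio `dP/dQ`: relative to `μ = (1 + t) ν + s δ₋₁`, the densities
  -- are `q = 1 / (1 + t)` and `p = t / (1 + t)` on `[0, ∞)`, while only `P` charges the atom `-1`
  set μ := ν.withDensity (fun t => ENNReal.ofReal (1 + t)) + s • Measure.dirac (-1)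
  have : SigmaFinite μ := by
    have := SigmaFinite.withDensity_ofReal (μ := ν) (fun t => 1 + t)
    infer_instance
  set q : ℝ → ℝ := fun t => if 0 ≤ t then (1 + t)⁻¹ else 0
  have hq : Measurable q := Measurable.ite measurableSet_Ici (by fun_prop) measurable_const
  have hq_mem : ∀ t, 0 ≤ q t ∧ q t ≤ 1 := fun t => by
    by_cases ht : 0 ≤ t
    · simp only [q, if_pos ht]
      exact ⟨by positivity, inv_le_one_of_one_le₀ (by linarith)⟩
    · simp [q, ht]
  have hμ : ∀ g : ℝ → ℝ≥0∞, Measurable g →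
      ∫⁻ t, g t ∂μ = ∫⁻ t, ENNReal.ofReal (1 + t) * g t ∂ν + s * g (-1) := fun g hg => by
    rw [lintegral_add_measure, lintegral_smul_measure, lintegral_dirac,
      lintegral_withDensity_eq_lintegral_mul _ (by fun_prop) hg]
    rfl
  have hP : ∀ α, ∫⁻ t, ENNReal.ofReal (1 - q t - α * q t) ∂μ =
      ∫⁻ t, ENNReal.ofReal (t - α) ∂ν + s := fun α => by
    rw [hμ _ (by fun_prop)]
    congr 1
    · refine lintegral_congr_ae ?_
      filter_upwards [hν] with t ht
      rw [← ENNReal.ofReal_mul (by linarith)]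
      simp only [q, if_pos ht]
      congr 1
      field_simp
      ring
    · simp [q]
  have hQ : ∫⁻ t, ENNReal.ofReal (q t) ∂μ = 1 := by
    have hdens : ∀ᵐ t ∂ν, ENNReal.ofReal (1 + t) * ENNReal.ofReal (q t) = 1 := by
      filter_upwards [hν] with t ht
      rw [← ENNReal.ofReal_mul (by linarith)]
      simp only [q, if_pos ht]
      rw [mul_inv_cancel₀ (by linarith), ENNReal.ofReal_one]
    simp [hμ _ (by fun_prop : Measurable fun t => ENNReal.ofReal (q t)), lintegral_congr_ae hdens,
      q]
  refine ⟨μ.withDensity fun t => ENNReal.ofReal (1 - q t),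
    μ.withDensity fun t => ENNReal.ofReal (q t), ⟨?_⟩, ⟨?_⟩, fun α => ?_⟩
  · rw [withDensity_apply _ MeasurableSet.univ, Measure.restrict_univ, ← hmass]
    simpa using hP 0
  · rwa [withDensity_apply _ MeasurableSet.univ, Measure.restrict_univ]
  · rw [hockeyStick_withDensity μ (by fun_prop) hq (fun t => sub_nonneg.2 (hq_mem t).2)
      (fun t => (hq_mem t).1) (fun t => sub_add_cancel 1 (q t)), hP]

theorem exists_hockeyStick_eq_of_convexOn {H : ℝ → ℝ} (hcx : ConvexOn ℝ (Ici 0) H)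
    (han : AntitoneOn H (Ici 0)) (h0 : H 0 = 1) (hlb : ∀ α, 0 ≤ α → max (1 - α) 0 ≤ H α) :
    ∃ P Q : Measure ℝ, IsProbabilityMeasure P ∧ IsProbabilityMeasure Q ∧
      ∀ α, 0 ≤ α → H α = hockeyStick α P Q := by
  obtain ⟨l, hl0, hlH, hl⟩ :=
    han.exists_tendsto_atTop fun α hα => (le_max_right _ _).trans (hlb α hα)
  set G := fun x => if 0 ≤ x then H x else H 0 + -1 * (x - 0)
  have hG : ConvexOn ℝ univ G :=
    hcx.convexOn_univ_ite fun x hx => by linarith [le_max_left (1 - x) 0, hlb x hx]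
  have hGH : ∀ α, 0 ≤ α → G α = H α := fun α hα => if_pos hα
  have hG_left : ∀ x ≤ 0, G x = G 0 - x := fun x hx => by
    rcases hx.lt_or_eq with hx | rfl
    · simp [G, hx.not_ge, sub_eq_add_neg]
    · simp
  obtain ⟨ν, hν, hν0, hνG⟩ := hG.exists_lintegral_ofReal_sub_eq hG_left
    (hl.congr' (by filter_upwards [eventually_ge_atTop 0] with α hα using (hGH α hα).symm))
  have hνH : ∀ α, 0 ≤ α →
      ∫⁻ t, ENNReal.ofReal (t - α) ∂ν + l.toNNReal = ENNReal.ofReal (H α) := fun α hα => by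
    rw [hνG, hGH α hα]
    change _ + ENNReal.ofReal l = _
    rw [← ENNReal.ofReal_add (sub_nonneg.2 (hlH α hα)) hl0, sub_add_cancel]
  obtain ⟨P, Q, hP, hQ, hPQ⟩ := exists_hockeyStick_eq_lintegral ν hν0 l.toNNReal
    (by simpa [h0] using hνH 0 le_rfl)
  refine ⟨P, Q, hP, hQ, fun α hα => ?_⟩
  rw [hPQ, hνH α hα, ENNReal.toReal_ofReal ((le_max_right _ _).trans (hlb α hα))]

/-- A function `H : ℝ_{≥0} → ℝ` is the hockey-stick divergence curve of some pair of
probability measures iff it is convex, nonincreasing, `H(0) = 1`, and `H(α) ≥ (1 − α)₊`. -/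
theorem hockeyStick_curve_characterization (H : ℝ → ℝ) :
    (∃ (Ω : Type) (_ : MeasurableSpace Ω) (P Q : Measure Ω),
        IsProbabilityMeasure P ∧ IsProbabilityMeasure Q ∧
        ∀ α : ℝ, 0 ≤ α → H α = hockeyStick α P Q)
    ↔ (ConvexOn ℝ (Set.Ici (0:ℝ)) H ∧ AntitoneOn H (Set.Ici (0:ℝ)) ∧
        H 0 = 1 ∧ ∀ α : ℝ, 0 ≤ α → max (1 - α) 0 ≤ H α) := by
  constructor
  · rintro ⟨Ω, _, P, Q, hP, hQ, hH⟩
    refine ⟨(convexOn_hockeyStick.subset (subset_univ _) (convex_Ici 0)).congr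
      fun α hα => (hH α hα).symm, fun a ha b hb hab => ?_, ?_, fun α hα => ?_⟩
    · rw [hH a ha, hH b hb]
      exact antitone_hockeyStick hab
    · rw [hH 0 le_rfl, hockeyStick_zero, probReal_univ]
    · rw [hH α hα]
      refine max_le ?_ (integral_nonneg fun _ => le_max_right _ _)
      simpa using sub_le_hockeyStick (P := P) (Q := Q) α
  · rintro ⟨hcx, han, h0, hlb⟩
    obtain ⟨P, Q, hP, hQ, hPQ⟩ := exists_hockeyStick_eq_of_convexOn hcx han h0 hlb
    exact ⟨ℝ, inferInstance, P, Q, hP, hQ, hPQ⟩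
end

section
/- Explicit realization of a hockey-stick curve: let H : ℝ_{≥0} → ℝ be convex, nonincreasing, with H(0) = 1 and H(α) ≥ (1 − α)₊ for all α ≥ 0. Define the conjugate H*(y) = sup_{α ≥ 0} (y·α − H(α)). Let Q be the uniform distribution on [0,1], and let P be the probability measure on ℝ whose cumulative distribution function is F_P(x) = 0 for x < 0, F_P(x) = 1 + H*(x − 1) for x ∈ [0,1), and F_P(x) = 1 for x ≥ 1 (so P may have an atom at 1). Then P is a well-defined probability measure and H_α(P‖Q) = H(α) for all α ≥ 0. -/
open MeasureTheory

/-- The conjugate `H*(y) = sup_{α ≥ 0} (y·α − H(α))`. -/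
noncomputable def fenchelNonneg (H : ℝ → ℝ) (y : ℝ) : ℝ :=
  sSup {r : ℝ | ∃ α : ℝ, 0 ≤ α ∧ r = y * α - H α}

/-!
Let `y ∈ [-1, 0]` be the slope of a supporting line of `H` at `α`. Then `H*(y) = y α - H(α)`, and
`α` is the slope of a supporting line of the convex function `H*` at `y`. Consequently the CDF
`F(x) = 1 + H*(x - 1)` of `P` grows at rate at least `α` on `[1 + y, 1]` (the atom at `1` only
helps) and at rate at most `α` on `(-∞, 1 + y)`. So `T = [1 + y, 1]` is a Hahn decomposition for
`P - α Q`, and `H_α(P‖Q) = P(T) - α Q(T) = -H*(y) + α y = H(α)`.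
-/

open Set Filter Topology

namespace ConvexOn

variable {S : Set ℝ} {f : ℝ → ℝ}

theorem exists_supporting_line (hf : ConvexOn ℝ S f) {x z₀ L : ℝ} (hx : x ∈ S) (hz₀ : z₀ ∈ S)
    (hxz₀ : x < z₀) (hL : ∀ z ∈ S, x < z → L ≤ slope f x z) :
    ∃ c, L ≤ c ∧ c ≤ slope f x z₀ ∧ ∀ z ∈ S, f x + c * (z - x) ≤ f z := by
  set R := slope f x '' {z ∈ S | x < z}
  have hR : R.Nonempty := ⟨_, z₀, ⟨hz₀, hxz₀⟩, rfl⟩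
  have hRL : ∀ r ∈ R, L ≤ r := by rintro _ ⟨z, ⟨hz, hxz⟩, rfl⟩; exact hL z hz hxz
  have hle : ∀ z ∈ S, x < z → sInf R ≤ slope f x z := fun z hz hxz =>
    csInf_le ⟨L, hRL⟩ ⟨z, ⟨hz, hxz⟩, rfl⟩
  refine ⟨sInf R, le_csInf hR hRL, hle z₀ hz₀ hxz₀, fun z hz => ?_⟩
  rcases lt_trichotomy z x with hzx | rfl | hxz
  · have : slope f z x ≤ sInf R := le_csInf hR <| by
      rintro _ ⟨w, ⟨hw, hxw⟩, rfl⟩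
      simpa only [slope_def_field] using hf.slope_mono_adjacent hz hw hzx hxw
    rw [slope_def_field, div_le_iff₀ (sub_pos.2 hzx)] at this
    linarith
  · simp
  · have := hle z hz hxz
    rw [slope_def_field, le_div_iff₀ (sub_pos.2 hxz)] at this
    linarith

theorem monotoneOn_of_isMinOn (hf : ConvexOn ℝ S f) {y : ℝ} (hy : y ∈ S) (hmin : IsMinOn f S y) :
    MonotoneOn f (S ∩ Ici y) := by
  rintro u ⟨-, hyu⟩ v ⟨hv, -⟩ huv
  have := hf.le_on_segment hy hv (by rw [segment_eq_Icc (hyu.trans huv)]; exact ⟨hyu, huv⟩)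
  rwa [max_eq_right (hmin hv)] at this

theorem antitoneOn_of_isMinOn (hf : ConvexOn ℝ S f) {y : ℝ} (hy : y ∈ S) (hmin : IsMinOn f S y) :
    AntitoneOn f (S ∩ Iic y) := by
  rintro u ⟨hu, -⟩ v ⟨-, hvy⟩ huv
  have := hf.le_on_segment hu hy (by rw [segment_eq_Icc (huv.trans hvy)]; exact ⟨huv, hvy⟩)
  rwa [max_eq_left (hmin hu)] at this

end ConvexOn

theorem Set.Ioc_projIcc {a b : ℝ} (hab : a ≤ b) (s t : ℝ) :
    Ioc (projIcc a b hab s : ℝ) (projIcc a b hab t) = Ioc s t ∩ Ioc a b := by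
  ext x
  simp only [coe_projIcc, mem_Ioc, mem_inter_iff]
  grind

namespace StieltjesFunction

variable {a b : ℝ}

/-- `φ` frozen outside `[a, b]`, as a Stieltjes function. -/
noncomputable def ofMonotoneOnIcc (hab : a ≤ b) {φ : ℝ → ℝ} (hφ : MonotoneOn φ (Icc a b))
    (hφc : ∀ x ∈ Icc a b, ContinuousWithinAt φ (Ici x) x) : StieltjesFunction ℝ where
  toFun x := φ (projIcc a b hab x)
  mono' _ _ hxy := hφ (projIcc a b hab _).2 (projIcc a b hab _).2 (monotone_projIcc hab hxy)
  right_continuous' x := ContinuousWithinAt.comp (f := fun y => (projIcc a b hab y : ℝ))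
    (hφc _ (projIcc a b hab x).2)
    (continuous_subtype_val.comp continuous_projIcc).continuousWithinAt
    fun _ hy => Subtype.coe_le_coe.2 (monotone_projIcc hab hy)

theorem ofMonotoneOnIcc_apply (hab : a ≤ b) {φ : ℝ → ℝ} (hφ : MonotoneOn φ (Icc a b))
    (hφc : ∀ x ∈ Icc a b, ContinuousWithinAt φ (Ici x) x) (x : ℝ) :
    ofMonotoneOnIcc hab hφ hφc x = φ (projIcc a b hab x) := rfl

theorem measure_ofMonotoneOnIcc (f : StieltjesFunction ℝ) (hab : a ≤ b) :
    (ofMonotoneOnIcc hab (f.mono.monotoneOn _) fun x _ => f.right_continuous x).measure =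
      f.measure.restrict (Ioc a b) :=
  Measure.ext_of_Ioc _ _ fun s t _ => by
    rw [measure_Ioc, Measure.restrict_apply measurableSet_Ioc, ← Ioc_projIcc hab, measure_Ioc,
      ofMonotoneOnIcc_apply, ofMonotoneOnIcc_apply]

theorem measure_restrict_Ioc_le (f g : StieltjesFunction ℝ)
    (hfg : MonotoneOn (fun x => g x - f x) (Icc a b)) :
    f.measure.restrict (Ioc a b) ≤ g.measure.restrict (Ioc a b) := by
  rcases lt_or_ge b a with hba | hab
  · simp [Ioc_eq_empty_of_le hba.le]
  set k := ofMonotoneOnIcc hab hfg fun x _ => (g.right_continuous x).sub (f.right_continuous x)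
  have hsum : (ofMonotoneOnIcc hab (f.mono.monotoneOn _) fun x _ => f.right_continuous x) + k =
      ofMonotoneOnIcc hab (g.mono.monotoneOn _) fun x _ => g.right_continuous x :=
    ext fun x => by simp only [k, add_apply, ofMonotoneOnIcc_apply, add_sub_cancel]
  rw [← measure_ofMonotoneOnIcc f hab, ← measure_ofMonotoneOnIcc g hab, ← hsum, measure_add]
  exact Measure.le_add_right le_rfl

theorem measure_restrict_Ioo_le (f g : StieltjesFunction ℝ)
    (hfg : MonotoneOn (fun x => g x - f x) (Ico a b)) :
    f.measure.restrict (Ioo a b) ≤ g.measure.restrict (Ioo a b) := by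
  rcases le_or_gt b a with hba | hab
  · simp [Ioo_eq_empty_of_le hba]
  obtain ⟨u, hu_mono, hu_mem, hu_lim⟩ := exists_seq_strictMono_tendsto' hab
  have hIoo : Ioo a b = ⋃ n, Ioc a (u n) := by
    refine Subset.antisymm (fun x hx => ?_) (iUnion_subset fun n => ?_)
    · obtain ⟨n, hn⟩ := (hu_lim.eventually (eventually_gt_nhds hx.2)).exists
      exact mem_iUnion.2 ⟨n, hx.1, hn.le⟩
    · exact Ioc_subset_Ioo_right (hu_mem n).2
  have hdir : Directed (· ⊆ ·) fun n => Ioc a (u n) :=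
    Monotone.directed_le fun _ _ hmn => Ioc_subset_Ioc_right (hu_mono.monotone hmn)
  refine Measure.le_iff.2 fun s hs => ?_
  rw [hIoo, Measure.restrict_iUnion_apply_eq_iSup hdir hs,
    Measure.restrict_iUnion_apply_eq_iSup hdir hs]
  exact iSup_mono fun n =>
    measure_restrict_Ioc_le f g (hfg.mono (Icc_subset_Ico_right (hu_mem n).2)) s

end StieltjesFunction

section hockeyStick

variable {Ω : Type*} [MeasurableSpace Ω]

theorem MeasureTheory.IsHahnDecomposition.measureReal_sub_le {μ ν : Measure Ω}
    [IsFiniteMeasure μ] [IsFiniteMeasure ν] {s : Set Ω} (h : IsHahnDecomposition ν μ s)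
    {A : Set Ω} (hA : MeasurableSet A) : μ.real A - ν.real A ≤ μ.real s - ν.real s := by
  have hle : ∀ {μ' ν' : Measure Ω} [IsFiniteMeasure ν'] {t B : Set Ω},
      μ'.restrict t ≤ ν'.restrict t → MeasurableSet B → μ'.real (B ∩ t) ≤ ν'.real (B ∩ t) :=
    fun {_ _} _ {_ B} hμν hB => by
      have := hμν B
      rw [Measure.restrict_apply hB, Measure.restrict_apply hB] at this
      exact ENNReal.toReal_mono (measure_ne_top _ _) this
  have hAs : μ.real (A \ s) ≤ ν.real (A \ s) := by
    simpa only [Set.sdiff_eq] using hle h.ge_on_compl hA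
  have hsA : ν.real (s \ A) ≤ μ.real (s \ A) := by
    simpa only [Set.sdiff_eq, inter_comm] using hle h.le_on hA.compl
  have hμA := measureReal_inter_add_sdiff (μ := μ) (s := A) h.measurableSet
  have hνA := measureReal_inter_add_sdiff (μ := ν) (s := A) h.measurableSet
  have hμs := measureReal_inter_add_sdiff (μ := μ) (s := s) hA
  have hνs := measureReal_inter_add_sdiff (μ := ν) (s := s) hA
  rw [inter_comm] at hμs hνs
  linarith

variable {P Q : Measure Ω} [IsFiniteMeasure P] [IsFiniteMeasure Q]

theorem setIntegral_sub_rnDeriv (α : ℝ) (A : Set Ω) :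
    ∫ ω in A, ((P.rnDeriv (P + Q) ω).toReal - α * (Q.rnDeriv (P + Q) ω).toReal) ∂(P + Q) =
      P.real A - α * Q.real A := by
  rw [integral_sub Measure.integrable_toReal_rnDeriv.restrict
    (Measure.integrable_toReal_rnDeriv.restrict.const_mul α), integral_const_mul,
    Measure.setIntegral_toReal_rnDeriv
      (Measure.absolutelyContinuous_of_le (Measure.le_add_right le_rfl)),
    Measure.setIntegral_toReal_rnDeriv
      (Measure.absolutelyContinuous_of_le (Measure.le_add_left le_rfl))]

theorem isGreatest_hockeyStick (α : ℝ) :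
    IsGreatest {r | ∃ A, MeasurableSet A ∧ P.real A - α * Q.real A = r} (hockeyStick α P Q) := by
  set h : Ω → ℝ := fun ω => (P.rnDeriv (P + Q) ω).toReal - α * (Q.rnDeriv (P + Q) ω).toReal
  have hmeas : Measurable h := (Measure.measurable_rnDeriv P _).ennreal_toReal.sub
    ((Measure.measurable_rnDeriv Q _).ennreal_toReal.const_mul α)
  have hint : Integrable h (P + Q) :=
    Measure.integrable_toReal_rnDeriv.sub (Measure.integrable_toReal_rnDeriv.const_mul α)
  refine ⟨⟨{ω | 0 ≤ h ω}, measurableSet_le measurable_const hmeas, ?_⟩, ?_⟩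
  · rw [← setIntegral_sub_rnDeriv, hockeyStick,
      ← integral_indicator (measurableSet_le measurable_const hmeas)]
    congr 1 with ω
    rw [indicator_apply]
    split_ifs with hω
    · exact (max_eq_left (α := ℝ) hω).symm
    · exact (max_eq_right (not_le.1 (show ¬ 0 ≤ h ω from hω)).le).symm
  · rintro _ ⟨A, -, rfl⟩
    rw [← setIntegral_sub_rnDeriv]
    calc ∫ ω in A, h ω ∂(P + Q) ≤ ∫ ω in A, max (h ω) 0 ∂(P + Q) :=
          integral_mono hint.restrict hint.pos_part.restrict fun ω => le_max_left _ _
      _ ≤ hockeyStick α P Q :=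
          setIntegral_le_integral hint.pos_part (.of_forall fun ω => le_max_right _ _)

theorem hockeyStick_eq_of_isHahnDecomposition {α : ℝ} (hα : 0 ≤ α) {T : Set Ω}
    (hT : IsHahnDecomposition (α.toNNReal • Q) P T) :
    hockeyStick α P Q = P.real T - α * Q.real T :=
  (isGreatest_hockeyStick α).unique ⟨⟨T, hT.measurableSet, rfl⟩, by
    rintro _ ⟨A, hA, rfl⟩
    simpa [hα] using hT.measureReal_sub_le hA⟩

end hockeyStick

section fenchelNonneg

variable {H : ℝ → ℝ} {y c : ℝ}

theorem fenchelNonneg_le (h : ∀ α, 0 ≤ α → y * α - H α ≤ c) : fenchelNonneg H y ≤ c :=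
  csSup_le ⟨_, 0, le_rfl, rfl⟩ (by rintro _ ⟨α, hα, rfl⟩; exact h α hα)

variable (hH : ∀ α, 0 ≤ α → 0 ≤ H α)
include hH

theorem le_fenchelNonneg (hy : y ≤ 0) {α : ℝ} (hα : 0 ≤ α) :
    y * α - H α ≤ fenchelNonneg H y := by
  refine le_csSup ⟨0, ?_⟩ ⟨α, hα, rfl⟩
  rintro _ ⟨β, hβ, rfl⟩
  nlinarith [hH β hβ]

theorem fenchelNonneg_nonpos (hy : y ≤ 0) : fenchelNonneg H y ≤ 0 :=
  fenchelNonneg_le fun α hα => by nlinarith [hH α hα]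

theorem monotoneOn_fenchelNonneg : MonotoneOn (fenchelNonneg H) (Iic 0) :=
  fun _ _ _ hz hyz => fenchelNonneg_le fun α hα =>
    (by nlinarith : _ ≤ _ * α - H α).trans (le_fenchelNonneg hH hz hα)

theorem convexOn_fenchelNonneg : ConvexOn ℝ (Iic 0) (fenchelNonneg H) := by
  refine ⟨convex_Iic 0, fun y hy z hz a b ha hb hab => fenchelNonneg_le fun α hα => ?_⟩
  have hy' := le_fenchelNonneg hH hy hα
  have hz' := le_fenchelNonneg hH hz hα
  calc (a • y + b • z) * α - H α = a * (y * α - H α) + b * (z * α - H α) := by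
        simp only [smul_eq_mul]; linear_combination H α * hab
    _ ≤ a • fenchelNonneg H y + b • fenchelNonneg H z := by
        simp only [smul_eq_mul]; gcongr

theorem continuousOn_fenchelNonneg : ContinuousOn (fenchelNonneg H) (Iic 0) := by
  intro y hy
  rcases (mem_Iic.1 hy).lt_or_eq with hy | rfl
  · exact ((convexOn_fenchelNonneg hH).subset Iio_subset_Iic_self (convex_Iio 0)
      |>.continuousOn isOpen_Iio).continuousAt (Iio_mem_nhds hy) |>.continuousWithinAt
  -- lower semicontinuity (a supremum of affine functions) plus monotonicity
  refine tendsto_order.2 ⟨fun c hc => ?_, fun c hc => ?_⟩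
  · obtain ⟨_, ⟨α, hα, rfl⟩, hcα⟩ := exists_lt_of_lt_csSup
      (⟨_, 0, le_rfl, rfl⟩ : {r | ∃ α : ℝ, 0 ≤ α ∧ r = 0 * α - H α}.Nonempty) hc
    have : ∀ᶠ z in 𝓝 (0 : ℝ), c < z * α - H α :=
      ((continuous_id.mul continuous_const).sub continuous_const).tendsto 0 |>.eventually
        (lt_mem_nhds hcα)
    filter_upwards [nhdsWithin_le_nhds this, self_mem_nhdsWithin] with z hz hz0
    exact hz.trans_le (le_fenchelNonneg hH hz0 hα)
  · filter_upwards [self_mem_nhdsWithin] with z hz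
    exact (monotoneOn_fenchelNonneg hH hz (mem_Iic.2 le_rfl) hz).trans_lt hc

theorem fenchelNonneg_eq_neg_one (h0 : H 0 = 1) (h1 : ∀ α, 0 ≤ α → 1 - α ≤ H α)
    (hy : y ≤ -1) : fenchelNonneg H y = -1 := by
  refine le_antisymm (fenchelNonneg_le fun α hα => by nlinarith [h1 α hα]) ?_
  simpa [h0] using le_fenchelNonneg hH (hy.trans (by norm_num)) le_rfl

end fenchelNonneg

section hockeyStickCDF

variable {H : ℝ → ℝ} (hH : ∀ α, 0 ≤ α → 0 ≤ H α)

/-- The distribution function of `P`. It agrees with the formula of the theorem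
(`hockeyStickCDF_eq_ite`) because `H*` is `-1` on `(-∞, -1]`. -/
noncomputable def hockeyStickCDF : StieltjesFunction ℝ where
  toFun x := if x < 1 then 1 + fenchelNonneg H (x - 1) else 1
  mono' x z hxz := by
    by_cases hz : z < 1
    · simp only [hxz.trans_lt hz, hz, if_true, add_le_add_iff_left]
      exact monotoneOn_fenchelNonneg hH (mem_Iic.2 (by linarith)) (mem_Iic.2 (by linarith))
        (by linarith)
    · simp only [hz, if_false]
      split_ifs with hx
      · linarith [fenchelNonneg_nonpos hH (y := x - 1) (by linarith)]
      · exact le_rfl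
  right_continuous' x := by
    by_cases hx : x < 1
    · refine ContinuousAt.continuousWithinAt ?_
      have hcont : ContinuousAt (fun z : ℝ => 1 + fenchelNonneg H (z - 1)) x :=
        continuousAt_const.add <| ((continuousOn_fenchelNonneg hH).continuousAt
          (Iic_mem_nhds (by linarith))).comp (continuousAt_id.sub continuousAt_const)
      refine hcont.congr ?_
      filter_upwards [Iio_mem_nhds hx] with z hz
      simp [mem_Iio.1 hz]
    · refine continuousWithinAt_const.congr (fun z hz => ?_) (if_neg hx)
      simp [not_lt.2 ((not_lt.1 hx).trans hz)]

theorem hockeyStickCDF_of_lt {x : ℝ} (hx : x < 1) :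
    hockeyStickCDF hH x = 1 + fenchelNonneg H (x - 1) := if_pos hx

theorem hockeyStickCDF_of_le {x : ℝ} (hx : 1 ≤ x) : hockeyStickCDF hH x = 1 := if_neg (not_lt.2 hx)

theorem leftLim_hockeyStickCDF {x : ℝ} (hx : x ≤ 1) :
    Function.leftLim (hockeyStickCDF hH) x = 1 + fenchelNonneg H (x - 1) := by
  refine leftLim_eq_of_tendsto ?_
  have hcont : ContinuousWithinAt (fun z : ℝ => fenchelNonneg H (z - 1)) (Iio x) x :=
    ContinuousWithinAt.comp (f := fun z => z - 1) (x := x)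
      (continuousOn_fenchelNonneg hH (x - 1) (by simpa)) (continuous_sub_right 1).continuousWithinAt
      fun z (hz : z < x) => show z - 1 ≤ 0 by linarith
  refine (continuousWithinAt_const.add hcont).tendsto.congr' ?_
  filter_upwards [self_mem_nhdsWithin] with z hz
  exact (hockeyStickCDF_of_lt hH ((mem_Iio.1 hz).trans_le hx)).symm

variable (h0 : H 0 = 1) (h1 : ∀ α, 0 ≤ α → 1 - α ≤ H α)
include h0 h1

theorem hockeyStickCDF_eq_ite (x : ℝ) : hockeyStickCDF hH x =
    if x < 0 then 0 else if x < 1 then 1 + fenchelNonneg H (x - 1) else 1 := by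
  by_cases hx : x < 0
  · rw [if_pos hx, hockeyStickCDF_of_lt hH (hx.trans one_pos),
      fenchelNonneg_eq_neg_one hH h0 h1 (by linarith), add_neg_cancel]
  · rw [if_neg hx]; rfl

theorem tendsto_hockeyStickCDF_atBot : Tendsto (hockeyStickCDF hH) atBot (𝓝 0) := by
  refine tendsto_const_nhds.congr' ?_
  filter_upwards [eventually_lt_atBot 0] with x hx
  rw [hockeyStickCDF_eq_ite hH h0 h1, if_pos hx]

omit h0 h1 in
theorem tendsto_hockeyStickCDF_atTop : Tendsto (hockeyStickCDF hH) atTop (𝓝 1) := by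
  refine tendsto_const_nhds.congr' ?_
  filter_upwards [eventually_ge_atTop 1] with x hx
  rw [hockeyStickCDF_of_le hH hx]

theorem isProbabilityMeasure_hockeyStickCDF : IsProbabilityMeasure (hockeyStickCDF hH).measure :=
  (hockeyStickCDF hH).isProbabilityMeasure (tendsto_hockeyStickCDF_atBot hH h0 h1)
    (tendsto_hockeyStickCDF_atTop hH)

theorem ae_mem_Ioc_hockeyStickCDF : ∀ᵐ x ∂(hockeyStickCDF hH).measure, x ∈ Ioc 0 1 := by
  have := isProbabilityMeasure_hockeyStickCDF hH h0 h1
  change (hockeyStickCDF hH).measure (Ioc 0 1)ᶜ = 0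
  rw [prob_compl_eq_zero_iff measurableSet_Ioc, StieltjesFunction.measure_Ioc,
    hockeyStickCDF_of_le hH le_rfl, hockeyStickCDF_of_lt hH one_pos, zero_sub,
    fenchelNonneg_eq_neg_one hH h0 h1 le_rfl]
  norm_num

end hockeyStickCDF

section explicitPair

variable {H : ℝ → ℝ} {α : ℝ}

theorem exists_supporting_slope (hconv : ConvexOn ℝ (Ici 0) H) (hanti : AntitoneOn H (Ici 0))
    (h0 : H 0 = 1) (h1 : ∀ α, 0 ≤ α → 1 - α ≤ H α) (hα : 0 ≤ α) :
    ∃ y, -1 ≤ y ∧ y ≤ 0 ∧ ∀ β, 0 ≤ β → H α + y * (β - α) ≤ H β := by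
  have hslope : ∀ z ∈ Ici (0 : ℝ), α < z → -1 ≤ slope H α z := fun z hz hαz => by
    have hz0 : 0 < z := hα.trans_lt hαz
    have h0z : -1 ≤ slope H 0 z := by
      rw [slope_def_field, h0, sub_zero, le_div_iff₀ hz0]; linarith [h1 z hz]
    rcases hα.eq_or_lt with rfl | hα0
    · exact h0z
    have := (hconv.slope_mono hz) ⟨mem_Ici.2 le_rfl, hz0.ne⟩ ⟨hα, hαz.ne⟩ hα
    rw [slope_comm, slope_comm H z] at this
    linarith
  obtain ⟨y, hy1, hy0, hy⟩ :=
    hconv.exists_supporting_line hα (z₀ := α + 1) (mem_Ici.2 (by linarith)) (by linarith) hslope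
  refine ⟨y, hy1, hy0.trans ?_, hy⟩
  rw [slope_def_field, add_sub_cancel_left, div_one, sub_nonpos]
  exact hanti hα (mem_Ici.2 (by linarith)) (by linarith)

variable (hH : ∀ α, 0 ≤ α → 0 ≤ H α) {y : ℝ}
include hH

theorem fenchelNonneg_eq_of_supporting (hα : 0 ≤ α) (hy : y ≤ 0)
    (hsupp : ∀ β, 0 ≤ β → H α + y * (β - α) ≤ H β) : fenchelNonneg H y = y * α - H α :=
  le_antisymm (fenchelNonneg_le fun β hβ => by linarith [hsupp β hβ]) (le_fenchelNonneg hH hy hα)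

theorem isMinOn_fenchelNonneg_sub (hα : 0 ≤ α) (hy : y ≤ 0)
    (hsupp : ∀ β, 0 ≤ β → H α + y * (β - α) ≤ H β) :
    IsMinOn (fun z => fenchelNonneg H z - α * z) (Iic 0) y := isMinOn_iff.2 fun z hz => by
  have := le_fenchelNonneg hH hz hα
  rw [fenchelNonneg_eq_of_supporting hH hα hy hsupp]
  linarith

theorem convexOn_fenchelNonneg_sub (hα : 0 ≤ α) :
    ConvexOn ℝ (Iic 0) (fun z => fenchelNonneg H z - α * z) :=
  (convexOn_fenchelNonneg hH).sub ((concaveOn_id (convex_Iic 0)).smul hα)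

theorem monotoneOn_fenchelNonneg_sub (hα : 0 ≤ α) (hy : y ≤ 0)
    (hsupp : ∀ β, 0 ≤ β → H α + y * (β - α) ≤ H β) :
    MonotoneOn (fun z => fenchelNonneg H z - α * z) (Icc y 0) :=
  ((convexOn_fenchelNonneg_sub hH hα).monotoneOn_of_isMinOn hy
    (isMinOn_fenchelNonneg_sub hH hα hy hsupp)).mono fun _ hz => ⟨hz.2, hz.1⟩

theorem antitoneOn_fenchelNonneg_sub (hα : 0 ≤ α) (hy : y ≤ 0)
    (hsupp : ∀ β, 0 ≤ β → H α + y * (β - α) ≤ H β) :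
    AntitoneOn (fun z => fenchelNonneg H z - α * z) (Iic y) :=
  ((convexOn_fenchelNonneg_sub hH hα).antitoneOn_of_isMinOn hy
    (isMinOn_fenchelNonneg_sub hH hα hy hsupp)).mono fun _ hz => ⟨hz.trans hy, hz⟩

theorem monotoneOn_hockeyStickCDF_sub (hα : 0 ≤ α) (hy : y ≤ 0)
    (hsupp : ∀ β, 0 ≤ β → H α + y * (β - α) ≤ H β) :
    MonotoneOn (fun x => hockeyStickCDF hH x - α * x) (Icc (1 + y) 1) := by
  have hψ : ∀ u v, 1 + y ≤ u → u ≤ v → v ≤ 1 →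
      fenchelNonneg H (u - 1) - α * (u - 1) ≤ fenchelNonneg H (v - 1) - α * (v - 1) :=
    fun u v hu huv hv => monotoneOn_fenchelNonneg_sub hH hα hy hsupp
      ⟨by linarith, by linarith⟩ ⟨by linarith, by linarith⟩ (by linarith)
  intro u hu v hv huv
  dsimp only
  rcases hv.2.lt_or_eq with hv1 | rfl
  · rw [hockeyStickCDF_of_lt hH (huv.trans_lt hv1), hockeyStickCDF_of_lt hH hv1]
    linarith [hψ u v hu.1 huv hv.2]
  rcases hu.2.lt_or_eq with hu1 | rfl
  · rw [hockeyStickCDF_of_lt hH hu1, hockeyStickCDF_of_le hH le_rfl]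
    have := hψ u 1 hu.1 hu1.le le_rfl
    rw [sub_self] at this
    linarith [fenchelNonneg_nonpos hH (le_refl 0)]
  · exact le_rfl

theorem monotoneOn_sub_hockeyStickCDF (hα : 0 ≤ α) (hy : y ≤ 0)
    (hsupp : ∀ β, 0 ≤ β → H α + y * (β - α) ≤ H β) :
    MonotoneOn (fun x => α * x - hockeyStickCDF hH x) (Iio (1 + y)) := by
  intro u hu v hv huv
  dsimp only
  rw [hockeyStickCDF_of_lt hH (by linarith [mem_Iio.1 hu]),
    hockeyStickCDF_of_lt hH (by linarith [mem_Iio.1 hv])]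
  have : fenchelNonneg H (v - 1) - α * (v - 1) ≤ fenchelNonneg H (u - 1) - α * (u - 1) :=
    antitoneOn_fenchelNonneg_sub hH hα hy hsupp (mem_Iic.2 (by linarith [mem_Iio.1 hu]))
      (mem_Iic.2 (by linarith [mem_Iio.1 hv])) (by linarith)
  linarith

theorem isHahnDecomposition_hockeyStickCDF (h0 : H 0 = 1) (h1 : ∀ α, 0 ≤ α → 1 - α ≤ H α)
    (hα : 0 ≤ α) (hy1 : -1 ≤ y) (hy0 : y ≤ 0) (hsupp : ∀ β, 0 ≤ β → H α + y * (β - α) ≤ H β) :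
    IsHahnDecomposition (α.toNNReal • volume.restrict (Icc (0 : ℝ) 1))
      (hockeyStickCDF hH).measure (Icc (1 + y) 1) := by
  set F := hockeyStickCDF hH
  set ℓ := α.toNNReal • StieltjesFunction.id
  have hℓx : ∀ x, ℓ x = α * x := fun x => congrArg (· * x) (Real.coe_toNNReal α hα)
  have hℓ : ℓ.measure = α.toNNReal • volume := by
    rw [StieltjesFunction.measure_smul, ← Real.volume_eq_stieltjes_id]
  have hQ : ∀ s ⊆ Icc 0 1, MeasurableSet s →
      (α.toNNReal • volume.restrict (Icc 0 1)).restrict s = ℓ.measure.restrict s :=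
    fun s hs hsm => by
      rw [hℓ, Measure.restrict_smul, Measure.restrict_smul, Measure.restrict_restrict hsm,
        inter_eq_left.2 hs]
  refine ⟨measurableSet_Icc, ?_, ?_⟩
  · calc (α.toNNReal • volume.restrict (Icc 0 1)).restrict (Icc (1 + y) 1)
        = ℓ.measure.restrict (Ioc (1 + y) 1) := by
          rw [hQ _ (Icc_subset_Icc (by linarith) le_rfl) measurableSet_Icc, hℓ,
            Measure.restrict_smul, Measure.restrict_smul, Measure.restrict_congr_set Ioc_ae_eq_Icc]
      _ ≤ F.measure.restrict (Ioc (1 + y) 1) :=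
          StieltjesFunction.measure_restrict_Ioc_le ℓ F <| by
            simpa only [hℓx] using monotoneOn_hockeyStickCDF_sub hH hα hy0 hsupp
      _ ≤ F.measure.restrict (Icc (1 + y) 1) := Measure.restrict_mono Ioc_subset_Icc_self le_rfl
  · calc F.measure.restrict (Icc (1 + y) 1)ᶜ = F.measure.restrict (Ioo 0 (1 + y)) := by
          conv_lhs =>
            rw [← Measure.restrict_eq_self_of_ae_mem (ae_mem_Ioc_hockeyStickCDF hH h0 h1)]
          rw [Measure.restrict_restrict measurableSet_Icc.compl]
          congr 1
          ext x
          simp only [mem_inter_iff, mem_compl_iff, mem_Icc, mem_Ioc, mem_Ioo]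
          grind
      _ ≤ ℓ.measure.restrict (Ioo 0 (1 + y)) :=
          StieltjesFunction.measure_restrict_Ioo_le F ℓ <| by
            simpa only [hℓx] using (monotoneOn_sub_hockeyStickCDF hH hα hy0 hsupp).mono
              Ico_subset_Iio_self
      _ = (α.toNNReal • volume.restrict (Icc 0 1)).restrict (Ioo 0 (1 + y)) :=
          (hQ _ (Ioo_subset_Icc_self.trans (Icc_subset_Icc le_rfl (by linarith)))
            measurableSet_Ioo).symm
      _ ≤ (α.toNNReal • volume.restrict (Icc 0 1)).restrict (Icc (1 + y) 1)ᶜ :=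
          Measure.restrict_mono (fun x hx hx' => hx.2.not_ge hx'.1) le_rfl

theorem measureReal_hockeyStickCDF_Icc {t : ℝ} (ht : t ≤ 1) :
    (hockeyStickCDF hH).measure.real (Icc t 1) = -fenchelNonneg H (t - 1) := by
  rw [measureReal_def, StieltjesFunction.measure_Icc, hockeyStickCDF_of_le hH le_rfl,
    leftLim_hockeyStickCDF hH ht, sub_add_cancel_left,
    ENNReal.toReal_ofReal (neg_nonneg.2 (fenchelNonneg_nonpos hH (by linarith)))]

end explicitPair

/-- Explicit realization of a hockey-stick curve: if `H` is convex, nonincreasing, `H(0) = 1`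
and `H(α) ≥ (1−α)₊`, then the probability measure `P` on `ℝ` with CDF `0` for `x < 0`,
`1 + H*(x−1)` for `x ∈ [0,1)` and `1` for `x ≥ 1`, together with `Q` the uniform distribution
on `[0,1]`, satisfies `H_α(P‖Q) = H(α)` for all `α ≥ 0`. -/
theorem explicit_dominating_pair (H : ℝ → ℝ)
    (hconv : ConvexOn ℝ (Set.Ici (0:ℝ)) H)
    (hanti : AntitoneOn H (Set.Ici (0:ℝ)))
    (h0 : H 0 = 1)
    (hlb : ∀ α : ℝ, 0 ≤ α → max (1 - α) 0 ≤ H α) :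
    ∃ P : Measure ℝ, IsProbabilityMeasure P ∧
      (∀ x : ℝ, P (Set.Iic x) =
        ENNReal.ofReal
          (if x < 0 then 0 else if x < 1 then 1 + fenchelNonneg H (x - 1) else 1)) ∧
      ∀ α : ℝ, 0 ≤ α →
        hockeyStick α P (volume.restrict (Set.Icc (0:ℝ) 1)) = H α := by
  have hH : ∀ α, 0 ≤ α → 0 ≤ H α := fun α hα => (le_max_right _ _).trans (hlb α hα)
  have h1 : ∀ α, 0 ≤ α → 1 - α ≤ H α := fun α hα => (le_max_left _ _).trans (hlb α hα)
  have := isProbabilityMeasure_hockeyStickCDF hH h0 h1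
  refine ⟨(hockeyStickCDF hH).measure, this, fun x => ?_, fun α hα => ?_⟩
  · rw [StieltjesFunction.measure_Iic _ (tendsto_hockeyStickCDF_atBot hH h0 h1), sub_zero,
      hockeyStickCDF_eq_ite hH h0 h1]
  obtain ⟨y, hy1, hy0, hsupp⟩ := exists_supporting_slope hconv hanti h0 h1 hα
  have hT := isHahnDecomposition_hockeyStickCDF hH h0 h1 hα hy1 hy0 hsupp
  rw [hockeyStick_eq_of_isHahnDecomposition hα hT,
    measureReal_hockeyStickCDF_Icc hH (by linarith), measureReal_restrict_apply measurableSet_Icc,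
    inter_eq_left.2 (Icc_subset_Icc (by linarith) le_rfl), Real.volume_real_Icc_of_le (by linarith),
    add_sub_cancel_left, fenchelNonneg_eq_of_supporting hH hα hy0 hsupp]
  ring
end

section
/- Adaptive composition of dominating pairs: let μ₁, ν₁ be probability measures on a measurable space Ω₁, let κ and η be Markov kernels from Ω₁ to a measurable space Ω₂, and let P, Q be probability measures on a measurable space Ω₁' and P', Q' probability measures on a measurable space Ω₂'. Assume that for every α ≥ 0, H_α(μ₁‖ν₁) ≤ H_α(P‖Q), and that for every α ≥ 0 and every ω₁ ∈ Ω₁, H_α(κ(ω₁)‖η(ω₁)) ≤ H_α(P'‖Q'). Then for every α ≥ 0, H_α(μ₁ ⊗ κ ‖ ν₁ ⊗ η) ≤ H_α(P × P' ‖ Q × Q'), where μ₁ ⊗ κ denotes the measure on Ω₁ × Ω₂ obtained by composing μ₁ with the kernel κ (the composition-product), and P × P' denotes the product measure. -/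
open MeasureTheory ProbabilityTheory

/-!
Work with the `ℝ≥0∞`-valued scaled divergence `E_{a,b}(P, Q) = ∫ (a p − b q)₊`. It is homogeneous
in `(a, b)`, so domination for all `α ≥ 0` gives domination for all finite `(a, b)`, and it equals
`sup_s (a P s − b Q s)`, so it may be computed with any dominating measure.

For a set `s`, disintegrating `μ₁ ⊗ κ` and `ν₁ ⊗ η` over `Ω₁` bounds `(μ₁ ⊗ κ) s − α (ν₁ ⊗ η) s`
by `∫ E_{p₁ ω, α q₁ ω}(κ ω, η ω) dω`, with `p₁, q₁` the densities of `μ₁, ν₁`; domination of the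
kernels replaces `(κ ω, η ω)` by `(P', Q')`. By Fubini this integral is `E_{1,α}(μ₁ × P', ν₁ × Q')`,
which, integrating in the other order, is `∫ E_{p' y, α q' y}(μ₁, ν₁) dy`. Domination of
`(μ₁, ν₁)` replaces them by `(P, Q)`, and Fubini again gives `E_{1,α}(P × P', Q × Q')`.
-/

open scoped ENNReal

lemma ENNReal.toReal_tsub_eq_max {x y : ℝ≥0∞} (hx : x ≠ ∞) (hy : y ≠ ∞) :
    (x - y).toReal = max (x.toReal - y.toReal) 0 := by
  rcases le_total y x with h | h
  · rw [ENNReal.toReal_sub_of_le h hx, max_eq_left (sub_nonneg.2 (ENNReal.toReal_mono hx h))]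
  · rw [tsub_eq_zero_of_le h, ENNReal.toReal_zero,
      max_eq_right (sub_nonpos.2 (ENNReal.toReal_mono hy h))]

section ScaledHockeyStick

variable {Ω Ω' : Type*} [MeasurableSpace Ω] [MeasurableSpace Ω']

lemma MeasureTheory.lintegral_tsub_eq_iSup (ν : Measure Ω) {f g : Ω → ℝ≥0∞}
    (hf : Measurable f) (hg : Measurable g) (hg_fin : ∫⁻ ω, g ω ∂ν ≠ ∞) :
    ∫⁻ ω, f ω - g ω ∂ν
      = ⨆ (s : Set Ω) (_ : MeasurableSet s), (∫⁻ ω in s, f ω ∂ν) - ∫⁻ ω in s, g ω ∂ν := by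
  refine le_antisymm ?_ (iSup₂_le fun s _ => ?_)
  · have hs : MeasurableSet {ω | g ω < f ω} := measurableSet_lt hg hf
    calc ∫⁻ ω, f ω - g ω ∂ν = ∫⁻ ω in {ω | g ω < f ω}, f ω - g ω ∂ν :=
          (setLIntegral_eq_of_support_subset fun ω hω =>
            tsub_pos_iff_lt.mp (pos_iff_ne_zero.mpr hω)).symm
      _ = (∫⁻ ω in {ω | g ω < f ω}, f ω ∂ν) - ∫⁻ ω in {ω | g ω < f ω}, g ω ∂ν :=
          lintegral_sub hg (ne_top_of_le_ne_top hg_fin (setLIntegral_le_lintegral _ _))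
            ((ae_restrict_iff' hs).mpr (.of_forall fun _ h => le_of_lt h))
      _ ≤ _ := le_iSup₂ (f := fun s (_ : MeasurableSet s) =>
          (∫⁻ ω in s, f ω ∂ν) - ∫⁻ ω in s, g ω ∂ν) _ hs
  · exact (lintegral_sub_le _ _ hg).trans (setLIntegral_le_lintegral _ _)

lemma MeasureTheory.lintegral_mul_tsub_mul_eq_iSup (ν : Measure Ω) {f g : Ω → ℝ≥0∞}
    (hf : Measurable f) (hg : Measurable g) (hg_fin : ∫⁻ ω, g ω ∂ν ≠ ∞) (a : ℝ≥0∞)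
    {b : ℝ≥0∞} (hb : b ≠ ∞) :
    ∫⁻ ω, a * f ω - b * g ω ∂ν
      = ⨆ (s : Set Ω) (_ : MeasurableSet s), a * ν.withDensity f s - b * ν.withDensity g s := by
  rw [lintegral_tsub_eq_iSup ν (hf.const_mul a) (hg.const_mul b)
    (by rw [lintegral_const_mul b hg]; exact ENNReal.mul_ne_top hb hg_fin)]
  refine iSup_congr fun s => iSup_congr fun hs => ?_
  rw [lintegral_const_mul a hf, lintegral_const_mul b hg, withDensity_apply _ hs,
    withDensity_apply _ hs]

noncomputable def scaledHockeyStick (a b : ℝ≥0∞) (P Q : Measure Ω) : ℝ≥0∞ :=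
  ∫⁻ ω, a * P.rnDeriv (P + Q) ω - b * Q.rnDeriv (P + Q) ω ∂(P + Q)

lemma scaledHockeyStick_eq_iSup (P Q : Measure Ω) [IsFiniteMeasure P] [IsFiniteMeasure Q]
    (a : ℝ≥0∞) {b : ℝ≥0∞} (hb : b ≠ ∞) :
    scaledHockeyStick a b P Q = ⨆ (s : Set Ω) (_ : MeasurableSet s), a * P s - b * Q s := by
  have h := lintegral_mul_tsub_mul_eq_iSup (P + Q) (Measure.measurable_rnDeriv P (P + Q))
    (Measure.measurable_rnDeriv Q _) (Measure.lintegral_rnDeriv_lt_top Q _).ne a hb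
  rwa [Measure.withDensity_rnDeriv_eq P _ (Measure.AbsolutelyContinuous.rfl.add_right Q),
    Measure.withDensity_rnDeriv_eq Q _ (Measure.AbsolutelyContinuous.rfl.add_right' P)] at h

lemma scaledHockeyStick_withDensity (ν : Measure Ω) {f g : Ω → ℝ≥0∞}
    (hf : Measurable f) (hg : Measurable g) (hf_fin : ∫⁻ ω, f ω ∂ν ≠ ∞)
    (hg_fin : ∫⁻ ω, g ω ∂ν ≠ ∞) (a : ℝ≥0∞) {b : ℝ≥0∞} (hb : b ≠ ∞) :
    scaledHockeyStick a b (ν.withDensity f) (ν.withDensity g) = ∫⁻ ω, a * f ω - b * g ω ∂ν := by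
  have := isFiniteMeasure_withDensity hf_fin
  have := isFiniteMeasure_withDensity hg_fin
  rw [scaledHockeyStick_eq_iSup _ _ a hb, lintegral_mul_tsub_mul_eq_iSup ν hf hg hg_fin a hb]

lemma sub_le_scaledHockeyStick (P Q : Measure Ω) [SigmaFinite P] [SigmaFinite Q]
    (a b : ℝ≥0∞) {s : Set Ω} (hs : MeasurableSet s) :
    a * P s - b * Q s ≤ scaledHockeyStick a b P Q :=
  calc a * P s - b * Q s
      = (∫⁻ ω in s, a * P.rnDeriv (P + Q) ω ∂(P + Q))
        - ∫⁻ ω in s, b * Q.rnDeriv (P + Q) ω ∂(P + Q) := by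
        rw [lintegral_const_mul a (Measure.measurable_rnDeriv _ _),
          lintegral_const_mul b (Measure.measurable_rnDeriv _ _),
          Measure.setLIntegral_rnDeriv' (Measure.AbsolutelyContinuous.rfl.add_right Q) hs,
          Measure.setLIntegral_rnDeriv' (Measure.AbsolutelyContinuous.rfl.add_right' P) hs]
    _ ≤ ∫⁻ ω in s, a * P.rnDeriv (P + Q) ω - b * Q.rnDeriv (P + Q) ω ∂(P + Q) :=
        lintegral_sub_le _ _ (measurable_const.mul (Measure.measurable_rnDeriv _ _))
    _ ≤ scaledHockeyStick a b P Q := setLIntegral_le_lintegral _ _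

lemma scaledHockeyStick_const_mul (P Q : Measure Ω) {c : ℝ≥0∞} (hc : c ≠ ∞) (a b : ℝ≥0∞) :
    scaledHockeyStick (c * a) (c * b) P Q = c * scaledHockeyStick a b P Q := by
  rw [scaledHockeyStick, scaledHockeyStick, ← lintegral_const_mul' c _ hc]
  simp only [ENNReal.mul_sub (fun _ _ => hc), mul_assoc]

lemma scaledHockeyStick_ne_top (P Q : Measure Ω) [IsFiniteMeasure P] {a : ℝ≥0∞} (ha : a ≠ ∞)
    (b : ℝ≥0∞) : scaledHockeyStick a b P Q ≠ ∞ := by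
  refine ne_top_of_le_ne_top
    (ENNReal.mul_ne_top ha (Measure.lintegral_rnDeriv_lt_top P (P + Q)).ne) ?_
  rw [← lintegral_const_mul a (Measure.measurable_rnDeriv _ _)]
  exact lintegral_mono fun ω => tsub_le_self

lemma hockeyStick_eq_toReal_scaledHockeyStick {α : ℝ} (hα : 0 ≤ α) (P Q : Measure Ω)
    [IsFiniteMeasure P] [IsFiniteMeasure Q] :
    hockeyStick α P Q = (scaledHockeyStick 1 (ENNReal.ofReal α) P Q).toReal := by
  rw [hockeyStick, scaledHockeyStick, ← integral_toReal]
  · refine integral_congr_ae ?_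
    filter_upwards [Measure.rnDeriv_ne_top P (P + Q), Measure.rnDeriv_ne_top Q (P + Q)]
      with ω hp hq
    rw [one_mul, ENNReal.toReal_tsub_eq_max hp (ENNReal.mul_ne_top ENNReal.ofReal_ne_top hq),
      ENNReal.toReal_mul, ENNReal.toReal_ofReal hα]
  · exact ((measurable_const.mul (Measure.measurable_rnDeriv _ _)).sub
      (measurable_const.mul (Measure.measurable_rnDeriv _ _))).aemeasurable
  · filter_upwards [Measure.rnDeriv_ne_top P (P + Q)] with ω hp
    exact (tsub_le_self.trans_lt (by rwa [one_mul, lt_top_iff_ne_top]))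

lemma scaledHockeyStick_le_of_forall_hockeyStick_le {μ ν : Measure Ω} {P Q : Measure Ω'}
    [IsFiniteMeasure μ] [IsFiniteMeasure ν] [IsFiniteMeasure P] [IsFiniteMeasure Q]
    (h : ∀ α : ℝ, 0 ≤ α → hockeyStick α μ ν ≤ hockeyStick α P Q)
    {a b : ℝ≥0∞} (ha : a ≠ ∞) (hb : b ≠ ∞) :
    scaledHockeyStick a b μ ν ≤ scaledHockeyStick a b P Q := by
  rcases eq_or_ne a 0 with rfl | ha₀
  · simp [scaledHockeyStick]
  obtain ⟨b', hb', rfl⟩ : ∃ b', b' ≠ ∞ ∧ b = a * b' :=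
    ⟨b / a, (ENNReal.div_lt_top hb ha₀).ne, (ENNReal.mul_div_cancel ha₀ ha).symm⟩
  suffices h₁ : scaledHockeyStick 1 b' μ ν ≤ scaledHockeyStick 1 b' P Q by
    simpa only [← scaledHockeyStick_const_mul _ _ ha, mul_one] using mul_le_mul_right h₁ a
  rw [← ENNReal.ofReal_toReal hb', ← ENNReal.toReal_le_toReal
      (scaledHockeyStick_ne_top _ _ ENNReal.one_ne_top _)
      (scaledHockeyStick_ne_top _ _ ENNReal.one_ne_top _),
    ← hockeyStick_eq_toReal_scaledHockeyStick ENNReal.toReal_nonneg,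
    ← hockeyStick_eq_toReal_scaledHockeyStick ENNReal.toReal_nonneg]
  exact h _ ENNReal.toReal_nonneg

lemma lintegral_scaledHockeyStick_mono {X : Type*} [MeasurableSpace X] {ρ : Measure X}
    {μ ν : X → Measure Ω} {P Q : Measure Ω'} [∀ x, IsFiniteMeasure (μ x)]
    [∀ x, IsFiniteMeasure (ν x)] [IsFiniteMeasure P] [IsFiniteMeasure Q]
    (h : ∀ x, ∀ α : ℝ, 0 ≤ α → hockeyStick α (μ x) (ν x) ≤ hockeyStick α P Q)
    {a b : ℝ≥0∞} (ha : a ≠ ∞) (hb : b ≠ ∞) {f g : X → ℝ≥0∞}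
    (hf : ∀ᵐ x ∂ρ, f x ≠ ∞) (hg : ∀ᵐ x ∂ρ, g x ≠ ∞) :
    ∫⁻ x, scaledHockeyStick (a * f x) (b * g x) (μ x) (ν x) ∂ρ
      ≤ ∫⁻ x, scaledHockeyStick (a * f x) (b * g x) P Q ∂ρ := by
  refine lintegral_mono_ae ?_
  filter_upwards [hf, hg] with x hfx hgx
  exact scaledHockeyStick_le_of_forall_hockeyStick_le (h x) (ENNReal.mul_ne_top ha hfx)
    (ENNReal.mul_ne_top hb hgx)

lemma scaledHockeyStick_prod (P Q : Measure Ω) (P' Q' : Measure Ω')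
    [IsFiniteMeasure P] [IsFiniteMeasure Q] [IsFiniteMeasure P'] [IsFiniteMeasure Q']
    (a : ℝ≥0∞) {b : ℝ≥0∞} (hb : b ≠ ∞) :
    scaledHockeyStick a b (P.prod P') (Q.prod Q')
      = ∫⁻ z, a * (P.rnDeriv (P + Q) z.1 * P'.rnDeriv (P' + Q') z.2)
          - b * (Q.rnDeriv (P + Q) z.1 * Q'.rnDeriv (P' + Q') z.2) ∂((P + Q).prod (P' + Q')) := by
  have hdensity {R S : Measure Ω} {R' S' : Measure Ω'} [IsFiniteMeasure R] [IsFiniteMeasure R']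
      (hR : R ≪ S) (hR' : R' ≪ S') [IsFiniteMeasure S] [IsFiniteMeasure S'] :
      R.prod R' = (S.prod S').withDensity fun z => R.rnDeriv S z.1 * R'.rnDeriv S' z.2 := by
    rw [← prod_withDensity (Measure.measurable_rnDeriv R S) (Measure.measurable_rnDeriv R' S'),
      Measure.withDensity_rnDeriv_eq R S hR, Measure.withDensity_rnDeriv_eq R' S' hR']
  have hfin (R : Measure Ω) (R' : Measure Ω') [IsFiniteMeasure R] [IsFiniteMeasure R'] :
      ∫⁻ z, R.rnDeriv (P + Q) z.1 * R'.rnDeriv (P' + Q') z.2 ∂((P + Q).prod (P' + Q')) ≠ ∞ := by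
    rw [lintegral_prod_mul (Measure.measurable_rnDeriv _ _).aemeasurable
      (Measure.measurable_rnDeriv _ _).aemeasurable]
    exact ENNReal.mul_ne_top (Measure.lintegral_rnDeriv_lt_top _ _).ne
      (Measure.lintegral_rnDeriv_lt_top _ _).ne
  rw [hdensity (R := P) (R' := P') (Measure.AbsolutelyContinuous.rfl.add_right Q)
      (Measure.AbsolutelyContinuous.rfl.add_right Q'),
    hdensity (R := Q) (R' := Q') (Measure.AbsolutelyContinuous.rfl.add_right' P)
      (Measure.AbsolutelyContinuous.rfl.add_right' P'),
    scaledHockeyStick_withDensity _ (by fun_prop) (by fun_prop) (hfin P P') (hfin Q Q') a hb]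

lemma scaledHockeyStick_prod_eq_lintegral_fst (P Q : Measure Ω) (P' Q' : Measure Ω')
    [IsFiniteMeasure P] [IsFiniteMeasure Q] [IsFiniteMeasure P'] [IsFiniteMeasure Q']
    (a : ℝ≥0∞) {b : ℝ≥0∞} (hb : b ≠ ∞) :
    scaledHockeyStick a b (P.prod P') (Q.prod Q')
      = ∫⁻ x, scaledHockeyStick (a * P.rnDeriv (P + Q) x) (b * Q.rnDeriv (P + Q) x) P' Q'
          ∂(P + Q) := by
  rw [scaledHockeyStick_prod P Q P' Q' a hb, lintegral_prod _ (by fun_prop)]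
  simp only [scaledHockeyStick, mul_assoc]

lemma scaledHockeyStick_prod_eq_lintegral_snd (P Q : Measure Ω) (P' Q' : Measure Ω')
    [IsFiniteMeasure P] [IsFiniteMeasure Q] [IsFiniteMeasure P'] [IsFiniteMeasure Q']
    (a : ℝ≥0∞) {b : ℝ≥0∞} (hb : b ≠ ∞) :
    scaledHockeyStick a b (P.prod P') (Q.prod Q')
      = ∫⁻ y, scaledHockeyStick (a * P'.rnDeriv (P' + Q') y) (b * Q'.rnDeriv (P' + Q') y) P Q
          ∂(P' + Q') := by
  rw [scaledHockeyStick_prod P Q P' Q' a hb, lintegral_prod_symm _ (by fun_prop)]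
  simp only [scaledHockeyStick, mul_assoc, mul_comm (P.rnDeriv (P + Q) _),
    mul_comm (Q.rnDeriv (P + Q) _)]

lemma scaledHockeyStick_compProd_le {Ω₂ : Type*} [MeasurableSpace Ω₂]
    (μ ν : Measure Ω) [IsFiniteMeasure μ] [IsFiniteMeasure ν]
    (κ η : Kernel Ω Ω₂) [IsFiniteKernel κ] [IsFiniteKernel η] (a : ℝ≥0∞) {b : ℝ≥0∞}
    (hb : b ≠ ∞) :
    scaledHockeyStick a b (μ.compProd κ) (ν.compProd η)
      ≤ ∫⁻ x, scaledHockeyStick (a * μ.rnDeriv (μ + ν) x) (b * ν.rnDeriv (μ + ν) x) (κ x) (η x)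
          ∂(μ + ν) := by
  rw [scaledHockeyStick_eq_iSup _ _ a hb]
  refine iSup₂_le fun s hs => ?_
  have hκs : Measurable fun x => κ x (Prod.mk x ⁻¹' s) := Kernel.measurable_kernel_prodMk_left hs
  have hηs : Measurable fun x => η x (Prod.mk x ⁻¹' s) := Kernel.measurable_kernel_prodMk_left hs
  calc a * μ.compProd κ s - b * ν.compProd η s
      = (∫⁻ x, a * μ.rnDeriv (μ + ν) x * κ x (Prod.mk x ⁻¹' s) ∂(μ + ν))
        - ∫⁻ x, b * ν.rnDeriv (μ + ν) x * η x (Prod.mk x ⁻¹' s) ∂(μ + ν) := by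
        simp only [mul_assoc]
        rw [lintegral_const_mul a ((Measure.measurable_rnDeriv _ _).fun_mul hκs),
          lintegral_const_mul b ((Measure.measurable_rnDeriv _ _).fun_mul hηs),
          lintegral_rnDeriv_mul (Measure.AbsolutelyContinuous.rfl.add_right ν) hκs.aemeasurable,
          lintegral_rnDeriv_mul (Measure.AbsolutelyContinuous.rfl.add_right' μ) hηs.aemeasurable,
          Measure.compProd_apply hs, Measure.compProd_apply hs]
    _ ≤ ∫⁻ x, a * μ.rnDeriv (μ + ν) x * κ x (Prod.mk x ⁻¹' s)
          - b * ν.rnDeriv (μ + ν) x * η x (Prod.mk x ⁻¹' s) ∂(μ + ν) :=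
        lintegral_sub_le _ _ ((measurable_const.mul (Measure.measurable_rnDeriv _ _)).mul hηs)
    _ ≤ _ := lintegral_mono fun x => sub_le_scaledHockeyStick _ _ _ _ (measurable_prodMk_left hs)

end ScaledHockeyStick

/-- Adaptive composition of dominating pairs: if `(P,Q)` dominates `(μ₁,ν₁)` and `(P',Q')`
dominates the pair of Markov kernels `(κ,η)` uniformly in the first coordinate, then
`(P × P', Q × Q')` dominates the composition-products `(μ₁ ⊗ κ, ν₁ ⊗ η)`. -/
theorem adaptive_composition_dominating
    {Ω₁ Ω₂ Ω₁' Ω₂' : Type*}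
    [MeasurableSpace Ω₁] [MeasurableSpace Ω₂] [MeasurableSpace Ω₁'] [MeasurableSpace Ω₂']
    (μ₁ ν₁ : Measure Ω₁) [IsProbabilityMeasure μ₁] [IsProbabilityMeasure ν₁]
    (κ η : Kernel Ω₁ Ω₂) [IsMarkovKernel κ] [IsMarkovKernel η]
    (P Q : Measure Ω₁') [IsProbabilityMeasure P] [IsProbabilityMeasure Q]
    (P' Q' : Measure Ω₂') [IsProbabilityMeasure P'] [IsProbabilityMeasure Q']
    (h₁ : ∀ α : ℝ, 0 ≤ α → hockeyStick α μ₁ ν₁ ≤ hockeyStick α P Q)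
    (h₂ : ∀ α : ℝ, 0 ≤ α → ∀ ω₁ : Ω₁, hockeyStick α (κ ω₁) (η ω₁) ≤ hockeyStick α P' Q') :
    ∀ α : ℝ, 0 ≤ α →
      hockeyStick α (μ₁.compProd κ) (ν₁.compProd η) ≤ hockeyStick α (P.prod P') (Q.prod Q') := by
  intro α hα
  set c := ENNReal.ofReal α
  have hc : c ≠ ∞ := ENNReal.ofReal_ne_top
  rw [hockeyStick_eq_toReal_scaledHockeyStick hα, hockeyStick_eq_toReal_scaledHockeyStick hα]
  refine ENNReal.toReal_mono (scaledHockeyStick_ne_top _ _ ENNReal.one_ne_top _) ?_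
  calc scaledHockeyStick 1 c (μ₁.compProd κ) (ν₁.compProd η)
      ≤ ∫⁻ x, scaledHockeyStick (1 * μ₁.rnDeriv (μ₁ + ν₁) x) (c * ν₁.rnDeriv (μ₁ + ν₁) x)
          (κ x) (η x) ∂(μ₁ + ν₁) := scaledHockeyStick_compProd_le μ₁ ν₁ κ η 1 hc
    _ ≤ ∫⁻ x, scaledHockeyStick (1 * μ₁.rnDeriv (μ₁ + ν₁) x) (c * ν₁.rnDeriv (μ₁ + ν₁) x)
          P' Q' ∂(μ₁ + ν₁) :=
        lintegral_scaledHockeyStick_mono (fun x β hβ => h₂ β hβ x) ENNReal.one_ne_top hc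
          (μ₁.rnDeriv_ne_top _) (ν₁.rnDeriv_ne_top _)
    _ = ∫⁻ y, scaledHockeyStick (1 * P'.rnDeriv (P' + Q') y) (c * Q'.rnDeriv (P' + Q') y)
          μ₁ ν₁ ∂(P' + Q') := by
        rw [← scaledHockeyStick_prod_eq_lintegral_fst _ _ _ _ 1 hc,
          scaledHockeyStick_prod_eq_lintegral_snd _ _ _ _ 1 hc]
    _ ≤ _ := lintegral_scaledHockeyStick_mono (fun _ => h₁) ENNReal.one_ne_top hc
          (P'.rnDeriv_ne_top _) (Q'.rnDeriv_ne_top _)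
    _ = scaledHockeyStick 1 c (P.prod P') (Q.prod Q') :=
        (scaledHockeyStick_prod_eq_lintegral_snd _ _ _ _ 1 hc).symm
end

section
/- Mixture comparison lemma for trade-off functions: let P₁,…,Pₙ and Q₁,…,Qₙ be probability measures on a common measurable space, let p₁,…,pₙ ≥ 0 with Σᵢ pᵢ = 1, and set P̄ = Σᵢ pᵢ Pᵢ and Q̄ = Σᵢ pᵢ Qᵢ. Let P, Q be probability measures (on a possibly different common space) such that T[Pᵢ, Qᵢ](x) ≥ T[P, Q](x) for every i ∈ {1,…,n} and every x ∈ [0,1]. Then for every γ ∈ [0,1] and every x ∈ [0,1], T[P̄, (1−γ)P̄ + γQ̄](x) ≥ T[P, (1−γ)P + γQ](x). -/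
open MeasureTheory

/-- The trade-off function `T[P,Q](α) = inf {∫ (1−φ) dQ : φ : Ω → [0,1] measurable, ∫ φ dP ≤ α}`. -/
noncomputable def tradeOff {Ω : Type*} [MeasurableSpace Ω] (P Q : Measure Ω) (α : ℝ) : ℝ :=
  sInf {r : ℝ | ∃ φ : Ω → ℝ, Measurable φ ∧ (∀ ω, φ ω ∈ Set.Icc (0:ℝ) 1) ∧
    (∫ ω, φ ω ∂P) ≤ α ∧ r = ∫ ω, (1 - φ ω) ∂Q}

section Aux

variable {Ω : Type*} [MeasurableSpace Ω]

lemma aux_integrable_of_Icc (μ : Measure Ω) [IsFiniteMeasure μ] {f : Ω → ℝ}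
    (hf : Measurable f) (hb : ∀ ω, f ω ∈ Set.Icc (0:ℝ) 1) : Integrable f μ := by
  refine Integrable.mono' (integrable_const (1:ℝ)) hf.aestronglyMeasurable ?_
  filter_upwards with ω
  rw [Real.norm_eq_abs, abs_le]
  exact ⟨by linarith [(hb ω).1], (hb ω).2⟩

lemma aux_bddBelow (P Q : Measure Ω) (α : ℝ) :
    BddBelow {r : ℝ | ∃ φ : Ω → ℝ, Measurable φ ∧ (∀ ω, φ ω ∈ Set.Icc (0:ℝ) 1) ∧
      (∫ ω, φ ω ∂P) ≤ α ∧ r = ∫ ω, (1 - φ ω) ∂Q} := by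
  refine ⟨0, ?_⟩
  rintro r ⟨φ, hφm, hφb, hφP, rfl⟩
  exact integral_nonneg fun ω => by simpa using (hφb ω).2

lemma aux_nonempty (P Q : Measure Ω) {α : ℝ} (hα : 0 ≤ α) :
    Set.Nonempty {r : ℝ | ∃ φ : Ω → ℝ, Measurable φ ∧ (∀ ω, φ ω ∈ Set.Icc (0:ℝ) 1) ∧
      (∫ ω, φ ω ∂P) ≤ α ∧ r = ∫ ω, (1 - φ ω) ∂Q} := by
  refine ⟨∫ ω, (1 - (0:ℝ)) ∂Q, fun _ => 0, measurable_const,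
    fun ω => ⟨le_refl 0, zero_le_one⟩, by simpa using hα, rfl⟩

lemma aux_tradeOff_le {P Q : Measure Ω} {α : ℝ} {φ : Ω → ℝ} (hm : Measurable φ)
    (hb : ∀ ω, φ ω ∈ Set.Icc (0:ℝ) 1) (hint : (∫ ω, φ ω ∂P) ≤ α) :
    tradeOff P Q α ≤ ∫ ω, (1 - φ ω) ∂Q := by
  rw [tradeOff]
  exact csInf_le (aux_bddBelow P Q α) ⟨φ, hm, hb, hint, rfl⟩

lemma aux_integral_Icc (μ : Measure Ω) [IsProbabilityMeasure μ] {f : Ω → ℝ}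
    (hf : Measurable f) (hb : ∀ ω, f ω ∈ Set.Icc (0:ℝ) 1) :
    (∫ ω, f ω ∂μ) ∈ Set.Icc (0:ℝ) 1 := by
  constructor
  · exact integral_nonneg fun ω => (hb ω).1
  · calc ∫ ω, f ω ∂μ ≤ ∫ _, (1:ℝ) ∂μ :=
          integral_mono (aux_integrable_of_Icc μ hf hb) (integrable_const 1) fun ω => (hb ω).2
      _ = 1 := by simp

lemma aux_integral_mix2 {a c : ℝ} (ha : 0 ≤ a) (hc : 0 ≤ c) {μ ν : Measure Ω} {f : Ω → ℝ}
    (hμ : Integrable f μ) (hν : Integrable f ν) :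
    ∫ ω, f ω ∂(ENNReal.ofReal a • μ + ENNReal.ofReal c • ν)
      = a * ∫ ω, f ω ∂μ + c * ∫ ω, f ω ∂ν := by
  rw [integral_add_measure (hμ.smul_measure ENNReal.ofReal_ne_top)
      (hν.smul_measure ENNReal.ofReal_ne_top), integral_smul_measure, integral_smul_measure,
    ENNReal.toReal_ofReal ha, ENNReal.toReal_ofReal hc, smul_eq_mul, smul_eq_mul]

lemma aux_integral_mixsum {n : ℕ} {c : Fin n → ℝ} (hc : ∀ i, 0 ≤ c i)
    {μ : Fin n → Measure Ω} {f : Ω → ℝ} (hf : ∀ i, Integrable f (μ i)) :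
    ∫ ω, f ω ∂(∑ i, ENNReal.ofReal (c i) • μ i) = ∑ i, c i * ∫ ω, f ω ∂(μ i) := by
  rw [integral_finset_sum_measure (fun i _ => (hf i).smul_measure ENNReal.ofReal_ne_top)]
  exact Finset.sum_congr rfl fun i _ => by
    rw [integral_smul_measure, ENNReal.toReal_ofReal (hc i), smul_eq_mul]

lemma aux_integrable_mixsum {n : ℕ} {c : Fin n → ℝ}
    {μ : Fin n → Measure Ω} {f : Ω → ℝ} (hf : ∀ i, Integrable f (μ i)) :
    Integrable f (∑ i, ENNReal.ofReal (c i) • μ i) :=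
  integrable_finset_sum_measure.2 fun i _ => (hf i).smul_measure ENNReal.ofReal_ne_top

end Aux

/-- Mixture comparison lemma for trade-off functions: if `T[Pᵢ,Qᵢ] ≥ T[P,Q]` for each `i`, then
for the mixtures `P̄ = Σᵢ pᵢ Pᵢ` and `Q̄ = Σᵢ pᵢ Qᵢ` and every `γ ∈ [0,1]`,
`T[P̄, (1−γ)P̄ + γQ̄] ≥ T[P, (1−γ)P + γQ]` pointwise on `[0,1]`. -/
theorem mixture_comparison_tradeoff
    {Ω Ω' : Type*} [MeasurableSpace Ω] [MeasurableSpace Ω'] {n : ℕ}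
    (P' Q' : Fin n → Measure Ω)
    (hP' : ∀ i, IsProbabilityMeasure (P' i)) (hQ' : ∀ i, IsProbabilityMeasure (Q' i))
    (p : Fin n → ℝ) (hp : ∀ i, 0 ≤ p i) (hpsum : ∑ i, p i = 1)
    (P Q : Measure Ω') [IsProbabilityMeasure P] [IsProbabilityMeasure Q]
    (hdom : ∀ i, ∀ x ∈ Set.Icc (0:ℝ) 1, tradeOff P Q x ≤ tradeOff (P' i) (Q' i) x)
    (γ : ℝ) (hγ : γ ∈ Set.Icc (0:ℝ) 1) :
    ∀ x ∈ Set.Icc (0:ℝ) 1,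
      tradeOff P (ENNReal.ofReal (1 - γ) • P + ENNReal.ofReal γ • Q) x ≤
        tradeOff (∑ i, ENNReal.ofReal (p i) • P' i)
          (ENNReal.ofReal (1 - γ) • (∑ i, ENNReal.ofReal (p i) • P' i)
            + ENNReal.ofReal γ • (∑ i, ENNReal.ofReal (p i) • Q' i)) x := by
  intro x hx
  have hγ0 : 0 ≤ γ := hγ.1
  have hγ1 : 0 ≤ 1 - γ := by linarith [hγ.2]
  conv_rhs => rw [tradeOff]
  refine le_csInf (aux_nonempty _ _ hx.1) ?_
  rintro b ⟨φ, hφm, hφb, hφP, rfl⟩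
  -- basic integrability
  have hgb : ∀ ω, (1 - φ ω) ∈ Set.Icc (0:ℝ) 1 := fun ω => ⟨by linarith [(hφb ω).2], by linarith [(hφb ω).1]⟩
  have hgm : Measurable fun ω => 1 - φ ω := measurable_const.sub hφm
  have hφintP' : ∀ i, Integrable φ (P' i) := fun i => by
    haveI := hP' i; exact aux_integrable_of_Icc _ hφm hφb
  have hgintP' : ∀ i, Integrable (fun ω => 1 - φ ω) (P' i) := fun i => by
    haveI := hP' i; exact aux_integrable_of_Icc _ hgm hgb
  have hgintQ' : ∀ i, Integrable (fun ω => 1 - φ ω) (Q' i) := fun i => by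
    haveI := hQ' i; exact aux_integrable_of_Icc _ hgm hgb
  -- the per-component type I/II errors
  set α : Fin n → ℝ := fun i => ∫ ω, φ ω ∂(P' i) with hα
  set β : Fin n → ℝ := fun i => ∫ ω, (1 - φ ω) ∂(Q' i) with hβ
  have hαmem : ∀ i, α i ∈ Set.Icc (0:ℝ) 1 := fun i => by
    haveI := hP' i; exact aux_integral_Icc _ hφm hφb
  have hβmem : ∀ i, β i ∈ Set.Icc (0:ℝ) 1 := fun i => by
    haveI := hQ' i; exact aux_integral_Icc _ hgm hgb
  set xbar : ℝ := ∑ i, p i * α i with hxbar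
  have hxbar_le : xbar ≤ x := by
    rw [hxbar]
    rw [aux_integral_mixsum hp hφintP'] at hφP
    exact hφP
  have hxbar_mem : xbar ∈ Set.Icc (0:ℝ) 1 := by
    constructor
    · exact Finset.sum_nonneg fun i _ => mul_nonneg (hp i) (hαmem i).1
    · calc ∑ i, p i * α i ≤ ∑ i, p i * 1 :=
            Finset.sum_le_sum fun i _ => mul_le_mul_of_nonneg_left (hαmem i).2 (hp i)
        _ = 1 := by simpa using hpsum
  set B : ℝ := ∑ i, p i * β i with hB
  -- compute b
  have hgP' : ∀ i, ∫ ω, (1 - φ ω) ∂(P' i) = 1 - α i := fun i => by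
    haveI := hP' i
    rw [integral_sub (integrable_const 1) (hφintP' i)]
    simp [hα]
  have hb_eq : (∫ ω, (1 - φ ω) ∂(ENNReal.ofReal (1 - γ) • (∑ i, ENNReal.ofReal (p i) • P' i)
      + ENNReal.ofReal γ • (∑ i, ENNReal.ofReal (p i) • Q' i)))
      = (1 - γ) * (1 - xbar) + γ * B := by
    rw [aux_integral_mix2 hγ1 hγ0 (aux_integrable_mixsum hgintP') (aux_integrable_mixsum hgintQ'),
      aux_integral_mixsum hp hgintP', aux_integral_mixsum hp hgintQ']
    have h1 : ∑ i, p i * ∫ ω, (1 - φ ω) ∂(P' i) = 1 - xbar := by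
      have h2 : ∑ i, p i * ∫ ω, (1 - φ ω) ∂(P' i) = ∑ i, (p i - p i * α i) :=
        Finset.sum_congr rfl fun i _ => by rw [hgP' i]; ring
      rw [h2, Finset.sum_sub_distrib, hpsum, hxbar]
    rw [h1, hB]
  rw [hb_eq]
  -- reduce to an ε-argument
  refine le_of_forall_pos_le_add fun ε hε => ?_
  -- choose near-optimal tests for T[P,Q] at levels α i
  have hchoice : ∀ i, ∃ r, (∃ ψ : Ω' → ℝ, Measurable ψ ∧ (∀ ω, ψ ω ∈ Set.Icc (0:ℝ) 1) ∧
      (∫ ω, ψ ω ∂P) ≤ α i ∧ r = ∫ ω, (1 - ψ ω) ∂Q) ∧ r < β i + ε := by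
    intro i
    have hTi : tradeOff P Q (α i) ≤ β i := by
      refine (hdom i (α i) (hαmem i)).trans ?_
      exact aux_tradeOff_le hφm hφb (le_of_eq rfl)
    have hlt : tradeOff P Q (α i) < β i + ε := by linarith
    rw [tradeOff] at hlt
    exact exists_lt_of_csInf_lt (aux_nonempty P Q (hαmem i).1) hlt
  choose r hr hrlt using hchoice
  choose ψ hψm hψb hψP hre using hr
  have hψint : ∀ i, Integrable (ψ i) P := fun i => aux_integrable_of_Icc _ (hψm i) (hψb i)
  have hrnonneg : ∀ i, 0 ≤ r i := fun i => by
    rw [hre i]; exact integral_nonneg fun ω => by simpa using (hψb i ω).2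
  set a : Fin n → ℝ := fun i => ∫ ω, ψ i ω ∂P with ha
  have hamem : ∀ i, a i ∈ Set.Icc (0:ℝ) 1 := fun i => aux_integral_Icc _ (hψm i) (hψb i)
  have haα : ∀ i, a i ≤ α i := fun i => hψP i
  set t : Fin n → ℝ := fun i => (α i - a i) / (1 - a i) with ht
  have ht0 : ∀ i, 0 ≤ t i := fun i =>
    div_nonneg (by linarith [haα i]) (by linarith [(hamem i).2])
  have ht1 : ∀ i, t i ≤ 1 := by
    intro i
    rcases eq_or_lt_of_le (hamem i).2 with h | h
    · simp only [ht]
      rw [h, sub_self, div_zero]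
      exact zero_le_one
    · simp only [ht]
      rw [div_le_one (by linarith)]
      linarith [(hαmem i).2]
  -- adjusted tests
  set ψ' : Fin n → Ω' → ℝ := fun i ω => ψ i ω + t i * (1 - ψ i ω) with hψ'
  have hψ'm : ∀ i, Measurable (ψ' i) := fun i =>
    (hψm i).add ((measurable_const.sub (hψm i)).const_mul (t i))
  have hψ'b : ∀ i ω, ψ' i ω ∈ Set.Icc (0:ℝ) 1 := by
    intro i ω
    show ψ i ω + t i * (1 - ψ i ω) ∈ Set.Icc (0:ℝ) 1
    constructor
    · exact add_nonneg (hψb i ω).1 (mul_nonneg (ht0 i) (by linarith [(hψb i ω).2]))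
    · nlinarith [(hψb i ω).1, (hψb i ω).2, ht0 i, ht1 i,
        mul_nonneg (sub_nonneg.2 (ht1 i)) (sub_nonneg.2 (hψb i ω).2)]
  have hψ'int : ∀ i, Integrable (ψ' i) P := fun i => aux_integrable_of_Icc _ (hψ'm i) (hψ'b i)
  have hψ'P : ∀ i, ∫ ω, ψ' i ω ∂P = α i := by
    intro i
    have hgint : Integrable (fun ω => 1 - ψ i ω) P := (integrable_const 1).sub (hψint i)
    have e1 : ∫ ω, t i * (1 - ψ i ω) ∂P = t i * (1 - a i) := by
      rw [show (fun ω => t i * (1 - ψ i ω)) = fun ω => t i • (1 - ψ i ω) from rfl,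
        integral_smul, integral_sub (integrable_const 1) (hψint i), smul_eq_mul]
      simp [ha]
    have hcalc : ∫ ω, ψ' i ω ∂P = a i + t i * (1 - a i) := by
      calc ∫ ω, ψ' i ω ∂P = ∫ ω, (ψ i ω + t i * (1 - ψ i ω)) ∂P := rfl
        _ = (∫ ω, ψ i ω ∂P) + ∫ ω, t i * (1 - ψ i ω) ∂P :=
            integral_add (hψint i) (hgint.const_mul (t i))
        _ = a i + t i * (1 - a i) := by rw [e1]
    rw [hcalc]
    rcases eq_or_lt_of_le (hamem i).2 with h | h
    · have hα1 : α i = 1 := le_antisymm (hαmem i).2 (h ▸ haα i)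
      rw [h, hα1]; ring
    · simp only [ht]
      rw [div_mul_cancel₀ _ (by linarith : (1:ℝ) - a i ≠ 0)]
      ring
  have hψ'Q : ∀ i, ∫ ω, (1 - ψ' i ω) ∂Q ≤ β i + ε := by
    intro i
    have heq : (fun ω => 1 - ψ' i ω) = fun ω => (1 - t i) • (1 - ψ i ω) := by
      funext ω; simp only [hψ', smul_eq_mul]; ring
    rw [heq, integral_smul, smul_eq_mul, ← hre i]
    calc (1 - t i) * r i ≤ 1 * r i :=
          mul_le_mul_of_nonneg_right (by linarith [ht0 i]) (hrnonneg i)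
      _ = r i := one_mul _
      _ ≤ β i + ε := le_of_lt (hrlt i)
  -- the aggregated test
  set Ψ : Ω' → ℝ := fun ω => ∑ i, p i * ψ' i ω with hΨ
  have hΨm : Measurable Ψ :=
    Finset.measurable_sum Finset.univ fun i _ => (hψ'm i).const_mul (p i)
  have hΨb : ∀ ω, Ψ ω ∈ Set.Icc (0:ℝ) 1 := by
    intro ω
    constructor
    · exact Finset.sum_nonneg fun i _ => mul_nonneg (hp i) (hψ'b i ω).1
    · calc ∑ i, p i * ψ' i ω ≤ ∑ i, p i * 1 :=
            Finset.sum_le_sum fun i _ => mul_le_mul_of_nonneg_left (hψ'b i ω).2 (hp i)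
        _ = 1 := by simpa using hpsum
  have hΨint : Integrable Ψ P := aux_integrable_of_Icc _ hΨm hΨb
  have hΨP : ∫ ω, Ψ ω ∂P = xbar := by
    rw [hΨ]
    rw [integral_finset_sum Finset.univ (fun i _ => (hψ'int i).const_mul (p i))]
    rw [hxbar]
    refine Finset.sum_congr rfl fun i _ => ?_
    rw [show (fun ω => p i * ψ' i ω) = fun ω => p i • ψ' i ω from rfl, integral_smul,
      smul_eq_mul, hψ'P i]
  have hΨQ : ∫ ω, (1 - Ψ ω) ∂Q ≤ B + ε := by
    have heq : (fun ω => 1 - Ψ ω) = fun ω => ∑ i, p i * (1 - ψ' i ω) := by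
      funext ω
      simp only [hΨ, mul_one_sub, Finset.sum_sub_distrib, hpsum]
    rw [heq]
    have hQint : ∀ i, Integrable (fun ω => 1 - ψ' i ω) Q := fun i =>
      aux_integrable_of_Icc _ (measurable_const.sub (hψ'm i))
        (fun ω => ⟨by linarith [(hψ'b i ω).2], by linarith [(hψ'b i ω).1]⟩)
    rw [integral_finset_sum Finset.univ (fun i _ => (hQint i).const_mul (p i))]
    have hterm : ∀ i, ∫ ω, p i * (1 - ψ' i ω) ∂Q ≤ p i * (β i + ε) := by
      intro i
      rw [show (fun ω => p i * (1 - ψ' i ω)) = fun ω => p i • (1 - ψ' i ω) from rfl,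
        integral_smul, smul_eq_mul]
      exact mul_le_mul_of_nonneg_left (hψ'Q i) (hp i)
    calc ∑ i, ∫ ω, p i * (1 - ψ' i ω) ∂Q ≤ ∑ i, p i * (β i + ε) :=
          Finset.sum_le_sum fun i _ => hterm i
      _ = B + ε := by
          rw [hB]
          simp only [mul_add]
          rw [Finset.sum_add_distrib, ← Finset.sum_mul, hpsum, one_mul]
  -- conclude
  have hle : tradeOff P (ENNReal.ofReal (1 - γ) • P + ENNReal.ofReal γ • Q) x ≤
      ∫ ω, (1 - Ψ ω) ∂(ENNReal.ofReal (1 - γ) • P + ENNReal.ofReal γ • Q) :=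
    aux_tradeOff_le hΨm hΨb (by rw [hΨP]; exact hxbar_le)
  have hΨintQ : Integrable Ψ Q := aux_integrable_of_Icc _ hΨm hΨb
  have hgΨintP : Integrable (fun ω => 1 - Ψ ω) P := (integrable_const 1).sub hΨint
  have hgΨintQ : Integrable (fun ω => 1 - Ψ ω) Q := (integrable_const 1).sub hΨintQ
  have hval : ∫ ω, (1 - Ψ ω) ∂(ENNReal.ofReal (1 - γ) • P + ENNReal.ofReal γ • Q)
      = (1 - γ) * (1 - xbar) + γ * ∫ ω, (1 - Ψ ω) ∂Q := by
    rw [aux_integral_mix2 hγ1 hγ0 hgΨintP hgΨintQ]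
    congr 1
    rw [integral_sub (integrable_const 1) hΨint, hΨP]
    simp
  refine hle.trans ?_
  rw [hval]
  have : γ * ∫ ω, (1 - Ψ ω) ∂Q ≤ γ * (B + ε) :=
    mul_le_mul_of_nonneg_left hΨQ hγ0
  nlinarith [hε.le]
end

section
/- Trade-off function against a mixture: for probability measures P, Q on a common measurable space, every γ ∈ [0,1], and every x ∈ [0,1], it holds that T[P, (1−γ)P + γQ](x) = (1−γ)(1−x) + γ·T[P,Q](x). -/
open MeasureTheory

private lemma integrable_of_Icc {Ω : Type*} [MeasurableSpace Ω] (μ : Measure Ω)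
    [IsFiniteMeasure μ] {φ : Ω → ℝ} (hm : Measurable φ)
    (h : ∀ ω, φ ω ∈ Set.Icc (0:ℝ) 1) : Integrable φ μ := by
  refine (integrable_const (1:ℝ)).mono' hm.aestronglyMeasurable ?_
  filter_upwards with ω
  rw [Real.norm_eq_abs, abs_le]
  exact ⟨by linarith [(h ω).1], (h ω).2⟩

private lemma integral_mix {Ω : Type*} [MeasurableSpace Ω] (P Q : Measure Ω)
    [IsFiniteMeasure P] [IsFiniteMeasure Q] {γ : ℝ} (h0 : 0 ≤ γ) (h1 : γ ≤ 1)
    (f : Ω → ℝ) (hfP : Integrable f P) (hfQ : Integrable f Q) :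
    ∫ ω, f ω ∂(ENNReal.ofReal (1 - γ) • P + ENNReal.ofReal γ • Q)
      = (1 - γ) * ∫ ω, f ω ∂P + γ * ∫ ω, f ω ∂Q := by
  rw [integral_add_measure (hfP.smul_measure ENNReal.ofReal_ne_top)
      (hfQ.smul_measure ENNReal.ofReal_ne_top),
    integral_smul_measure, integral_smul_measure,
    ENNReal.toReal_ofReal (by linarith), ENNReal.toReal_ofReal h0, smul_eq_mul, smul_eq_mul]

/-- Trade-off function against a mixture:
`T[P, (1−γ)P + γQ](x) = (1−γ)(1−x) + γ·T[P,Q](x)` for `γ ∈ [0,1]`, `x ∈ [0,1]`. -/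
theorem tradeOff_mixture
    {Ω : Type*} [MeasurableSpace Ω]
    (P Q : Measure Ω) [IsProbabilityMeasure P] [IsProbabilityMeasure Q]
    (γ : ℝ) (hγ : γ ∈ Set.Icc (0:ℝ) 1) :
    ∀ x ∈ Set.Icc (0:ℝ) 1,
      tradeOff P (ENNReal.ofReal (1 - γ) • P + ENNReal.ofReal γ • Q) x
        = (1 - γ) * (1 - x) + γ * tradeOff P Q x := by
  obtain ⟨hγ0, hγ1⟩ := hγ
  intro x hx
  obtain ⟨hx0, hx1⟩ := hx
  set μ := ENNReal.ofReal (1 - γ) • P + ENNReal.ofReal γ • Q with hμ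
  set S1 := {r : ℝ | ∃ φ : Ω → ℝ, Measurable φ ∧ (∀ ω, φ ω ∈ Set.Icc (0:ℝ) 1) ∧
    (∫ ω, φ ω ∂P) ≤ x ∧ r = ∫ ω, (1 - φ ω) ∂μ} with hS1
  set S2 := {r : ℝ | ∃ φ : Ω → ℝ, Measurable φ ∧ (∀ ω, φ ω ∈ Set.Icc (0:ℝ) 1) ∧
    (∫ ω, φ ω ∂P) ≤ x ∧ r = ∫ ω, (1 - φ ω) ∂Q} with hS2
  have hrange_x : ∀ ω : Ω, (fun _ : Ω => x) ω ∈ Set.Icc (0:ℝ) 1 := fun ω => ⟨hx0, hx1⟩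
  have hintP_x : (∫ _ : Ω, x ∂P) ≤ x := by simp
  have hmem2 : (1 - x) ∈ S2 := by
    refine ⟨fun _ => x, measurable_const, hrange_x, hintP_x, ?_⟩
    simp
  have hne2 : S2.Nonempty := ⟨1 - x, hmem2⟩
  have hbdd2 : BddBelow S2 := by
    refine ⟨0, fun r hr => ?_⟩
    obtain ⟨φ, hmeas, hrange, hint, hr⟩ := hr
    rw [hr]
    refine integral_nonneg fun ω => ?_
    simp only [Pi.zero_apply]
    linarith [(hrange ω).2]
  have hbdd1 : BddBelow S1 := by
    refine ⟨0, fun r hr => ?_⟩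
    obtain ⟨φ, hmeas, hrange, hint, hr⟩ := hr
    rw [hr]
    refine integral_nonneg fun ω => ?_
    simp only [Pi.zero_apply]
    linarith [(hrange ω).2]
  have hne1 : S1.Nonempty := by
    refine ⟨∫ ω, (1 - (fun _ : Ω => x) ω) ∂μ,
      fun _ => x, measurable_const, hrange_x, hintP_x, rfl⟩
  -- key upper bound: for every r ∈ S2, sInf S1 ≤ (1-γ)(1-x) + γ r
  have key : ∀ r ∈ S2, sInf S1 ≤ (1 - γ) * (1 - x) + γ * r := by
    intro r hr
    obtain ⟨φ, hmeas, hrange, hint, hr⟩ := hr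
    have hφP : Integrable φ P := integrable_of_Icc P hmeas hrange
    have hφQ : Integrable φ Q := integrable_of_Icc Q hmeas hrange
    set m := ∫ ω, φ ω ∂P with hm
    have hm1 : m ≤ 1 := by
      calc m ≤ ∫ _ : Ω, (1:ℝ) ∂P :=
        integral_mono hφP (integrable_const 1) (fun ω => (hrange ω).2)
      _ = 1 := by simp
    have hr0 : 0 ≤ r := by
      rw [hr]
      refine integral_nonneg fun ω => ?_
      simp only [Pi.zero_apply]
      linarith [(hrange ω).2]
    set s := (x - m) / (1 - m) with hs
    have hs0 : 0 ≤ s := by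
      rcases eq_or_lt_of_le hm1 with h|h
      · rw [hs, h]; norm_num
      · exact div_nonneg (by linarith) (by linarith)
    have hs1 : s ≤ 1 := by
      rcases eq_or_lt_of_le hm1 with h|h
      · rw [hs, h]; norm_num
      · rw [hs, div_le_one (by linarith)]; linarith
    set ψ := fun ω => φ ω + s * (1 - φ ω) with hψ
    have hψmeas : Measurable ψ :=
      hmeas.add (measurable_const.mul (measurable_const.sub hmeas))
    have hψrange : ∀ ω, ψ ω ∈ Set.Icc (0:ℝ) 1 := by
      intro ω
      obtain ⟨h1', h2'⟩ := hrange ω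
      constructor
      · have : 0 ≤ s * (1 - φ ω) := mul_nonneg hs0 (by linarith)
        simp only [hψ]; linarith
      · simp only [hψ]; nlinarith
    have hψP : Integrable ψ P := integrable_of_Icc P hψmeas hψrange
    have hψQ : Integrable ψ Q := integrable_of_Icc Q hψmeas hψrange
    have hintψ : (∫ ω, ψ ω ∂P) = m + s * (1 - m) := by
      have h1 : Integrable (fun ω => s * (1 - φ ω)) P :=
        ((integrable_const 1).sub hφP).const_mul s
      rw [hψ]
      rw [integral_add hφP h1, integral_const_mul,
        integral_sub (integrable_const 1) hφP]
      simp [hm]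
    have hψle : (∫ ω, ψ ω ∂P) ≤ x := by
      rw [hintψ]
      rcases eq_or_lt_of_le hm1 with h|h
      · have hs' : s = 0 := by rw [hs, h]; norm_num
        rw [hs']; simpa using hint
      · have : s * (1 - m) = x - m := div_mul_cancel₀ _ (by linarith)
        linarith [this]
    have h1ψP : Integrable (fun ω => 1 - ψ ω) P := (integrable_const 1).sub hψP
    have h1ψQ : Integrable (fun ω => 1 - ψ ω) Q := (integrable_const 1).sub hψQ
    have hval : (∫ ω, (1 - ψ ω) ∂μ)
        = (1 - γ) * (1 - (m + s * (1 - m))) + γ * ((1 - s) * r) := by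
      rw [hμ, integral_mix P Q hγ0 hγ1 _ h1ψP h1ψQ]
      have e1 : (∫ ω, (1 - ψ ω) ∂P) = 1 - (m + s * (1 - m)) := by
        rw [integral_sub (integrable_const 1) hψP, hintψ]; simp
      have e2 : (∫ ω, (1 - ψ ω) ∂Q) = (1 - s) * r := by
        have : ∀ ω, (1 : ℝ) - ψ ω = (1 - s) * (1 - φ ω) := by
          intro ω; simp only [hψ]; ring
        rw [hr]
        calc (∫ ω, (1 - ψ ω) ∂Q) = ∫ ω, (1 - s) * (1 - φ ω) ∂Q := by
              exact integral_congr_ae (Filter.Eventually.of_forall this)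
        _ = (1 - s) * ∫ ω, (1 - φ ω) ∂Q := integral_const_mul _ _
      rw [e1, e2]
    have hmemS1 : (∫ ω, (1 - ψ ω) ∂μ) ∈ S1 :=
      ⟨ψ, hψmeas, hψrange, hψle, rfl⟩
    have hle : (∫ ω, (1 - ψ ω) ∂μ) ≤ (1 - γ) * (1 - x) + γ * r := by
      rw [hval]
      rcases eq_or_lt_of_le hm1 with h|h
      · have hs' : s = 0 := by rw [hs, h]; norm_num
        have hx1' : x = 1 := le_antisymm hx1 (h ▸ hint)
        rw [hs', hx1', h]
        norm_num
      · have : s * (1 - m) = x - m := div_mul_cancel₀ _ (by linarith)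
        have h2 : (1 - γ) * (1 - (m + s * (1 - m))) = (1 - γ) * (1 - x) := by
          rw [this]; ring
        rw [h2]
        have hsr : 0 ≤ γ * s * r := mul_nonneg (mul_nonneg hγ0 hs0) hr0
        nlinarith [hsr]
    exact le_trans (csInf_le hbdd1 hmemS1) hle
  have hge : (1 - γ) * (1 - x) + γ * sInf S2 ≤ sInf S1 := by
    refine le_csInf hne1 ?_
    intro r hr
    obtain ⟨φ, hmeas, hrange, hint, hr⟩ := hr
    have hφP : Integrable φ P := integrable_of_Icc P hmeas hrange
    have hφQ : Integrable φ Q := integrable_of_Icc Q hmeas hrange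
    have h1P : Integrable (fun ω => 1 - φ ω) P := (integrable_const 1).sub hφP
    have h1Q : Integrable (fun ω => 1 - φ ω) Q := (integrable_const 1).sub hφQ
    have hval : r = (1 - γ) * (1 - ∫ ω, φ ω ∂P) + γ * ∫ ω, (1 - φ ω) ∂Q := by
      rw [hr, hμ, integral_mix P Q hγ0 hγ1 _ h1P h1Q,
        integral_sub (integrable_const 1) hφP]
      simp
    have hQmem : (∫ ω, (1 - φ ω) ∂Q) ∈ S2 := ⟨φ, hmeas, hrange, hint, rfl⟩
    have h1 : sInf S2 ≤ ∫ ω, (1 - φ ω) ∂Q := csInf_le hbdd2 hQmem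
    have h2 : (1 - γ) * (1 - x) ≤ (1 - γ) * (1 - ∫ ω, φ ω ∂P) := by nlinarith
    have h3 : γ * sInf S2 ≤ γ * ∫ ω, (1 - φ ω) ∂Q := by nlinarith
    linarith [hval]
  have hle : sInf S1 ≤ (1 - γ) * (1 - x) + γ * sInf S2 := by
    rcases eq_or_lt_of_le hγ0 with h|h
    · have hk := key (1 - x) hmem2
      rw [← h] at hk ⊢
      linarith
    · have h2 : (sInf S1 - (1 - γ) * (1 - x)) / γ ≤ sInf S2 := by
        refine le_csInf hne2 ?_
        intro r hr
        have hk := key r hr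
        rw [div_le_iff₀ h]
        linarith
      have h3 := mul_le_mul_of_nonneg_left h2 (le_of_lt h)
      rw [mul_div_cancel₀ _ (ne_of_gt h)] at h3
      linarith
  have e1 : tradeOff P μ x = sInf S1 := rfl
  have e2 : tradeOff P Q x = sInf S2 := rfl
  rw [e1, e2]
  linarith
end

section
/- Privacy amplification by Poisson sampling: let Z be a type, let M assign to every finite set S of elements of Z a probability measure M(S) on a measurable output space Ω, and let γ ∈ [0,1]. Define the Poisson-subsampled mechanism by (M∘S_γ)(D) = Σ_{T ⊆ D} γ^{|T|} (1−γ)^{|D|−|T|} · M(T), the mixture over all subsets T of the finite set D with each element of D included independently with probability γ. Suppose (P,Q) dominates M for add neighbors, i.e. for all α ≥ 0, every finite set S and every x ∉ S, H_α(M(S) ‖ M(S ∪ {x})) ≤ H_α(P‖Q). Then (P, (1−γ)P + γQ) dominates M∘S_γ for add neighbors: for all α ≥ 0, every finite set S and every x ∉ S, H_α((M∘S_γ)(S) ‖ (M∘S_γ)(S ∪ {x})) ≤ H_α(P ‖ (1−γ)P + γQ). -/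
open MeasureTheory

/-- The Poisson-subsampled mechanism: each element of the finite dataset `D` is kept
independently with probability `γ`, so the output distribution is
`Σ_{T ⊆ D} γ^{|T|} (1−γ)^{|D|−|T|} · M(T)`. -/
noncomputable def poissonSubsample {Z Ω : Type*} [MeasurableSpace Ω] [DecidableEq Z]
    (M : Finset Z → Measure Ω) (γ : ℝ) (D : Finset Z) : Measure Ω :=
  ∑ T ∈ D.powerset, ENNReal.ofReal (γ ^ T.card * (1 - γ) ^ (D.card - T.card)) • M T

/-! Let `A` be the subsampled mechanism on `S` and `B` the one on `S` with `x` always added.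
Conditioning on whether `x` is sampled, the subsampled mechanism on `insert x S` is
`(1-γ) A + γ B`. For every event `E`,
`A(E) - α((1-γ)A(E) + γB(E)) = c (A(E) - β B(E))` with `c = 1 - α(1-γ)` and `β = αγ/c`,
and the same identity holds for `P, Q`. Since `H` is the supremum over events of these
differences, for `c > 0` the claim reduces to `H_β(A‖B) ≤ H_β(P‖Q)`, which is joint convexity:
`A` and `B` are the same binomial mixture of the neighbouring pairs `(M T, M (insert x T))`.
For `c ≤ 0` the left side is `0`. -/

open Finset

instance isFiniteMeasure_ofReal_smul {Ω : Type*} [MeasurableSpace Ω]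
    (μ : Measure Ω) [IsFiniteMeasure μ] (r : ℝ) : IsFiniteMeasure (ENNReal.ofReal r • μ) :=
  isFiniteMeasureSMulNNReal (r := r.toNNReal)

section Mixture

variable {Ω : Type*} [MeasurableSpace Ω]

lemma measureReal_ofReal_smul_add_ofReal_smul {a b : ℝ} (ha : 0 ≤ a) (hb : 0 ≤ b)
    (μ ν : Measure Ω) [IsFiniteMeasure μ] [IsFiniteMeasure ν] (E : Set Ω) :
    (ENNReal.ofReal a • μ + ENNReal.ofReal b • ν).real E = a * μ.real E + b * ν.real E := by
  rw [measureReal_add_apply, measureReal_ennreal_smul_apply, measureReal_ennreal_smul_apply,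
    ENNReal.toReal_ofReal ha, ENNReal.toReal_ofReal hb]

lemma measureReal_sum_ofReal_smul {ι : Type*} (s : Finset ι) {w : ι → ℝ}
    (hw : ∀ i ∈ s, 0 ≤ w i) (μ : ι → Measure Ω) [∀ i, IsFiniteMeasure (μ i)] (E : Set Ω) :
    (∑ i ∈ s, ENNReal.ofReal (w i) • μ i).real E = ∑ i ∈ s, w i * (μ i).real E := by
  rw [measureReal_def, Measure.finsetSum_apply, ENNReal.toReal_sum (fun i _ => by finiteness)]
  refine sum_congr rfl fun i hi => ?_
  rw [Measure.smul_apply, smul_eq_mul, ENNReal.toReal_mul, ENNReal.toReal_ofReal (hw i hi),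
    measureReal_def]

end Mixture

section HockeyStick

variable {Ω : Type*} [MeasurableSpace Ω] {α : ℝ} {P Q : Measure Ω}
  [IsFiniteMeasure P] [IsFiniteMeasure Q]

lemma integrable_toReal_rnDeriv_sub_mul :
    Integrable (fun ω => (P.rnDeriv (P + Q) ω).toReal - α * (Q.rnDeriv (P + Q) ω).toReal)
      (P + Q) :=
  Measure.integrable_toReal_rnDeriv.sub (Measure.integrable_toReal_rnDeriv.const_mul α)

lemma setIntegral_toReal_rnDeriv_sub_mul (E : Set Ω) :
    ∫ ω in E, ((P.rnDeriv (P + Q) ω).toReal - α * (Q.rnDeriv (P + Q) ω).toReal) ∂(P + Q)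
      = P.real E - α * Q.real E := by
  have hP : P ≪ P + Q := Measure.absolutelyContinuous_of_le (Measure.le_add_right le_rfl)
  have hQ : Q ≪ P + Q := Measure.absolutelyContinuous_of_le (Measure.le_add_left le_rfl)
  rw [integral_sub Measure.integrable_toReal_rnDeriv.restrict
      (Measure.integrable_toReal_rnDeriv.restrict.const_mul α), integral_const_mul,
    Measure.setIntegral_toReal_rnDeriv hP, Measure.setIntegral_toReal_rnDeriv hQ]

lemma measureReal_sub_le_hockeyStick (E : Set Ω) :
    P.real E - α * Q.real E ≤ hockeyStick α P Q := by
  rw [← setIntegral_toReal_rnDeriv_sub_mul]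
  calc _ ≤ ∫ ω in E, max ((P.rnDeriv (P + Q) ω).toReal - α * (Q.rnDeriv (P + Q) ω).toReal) 0
          ∂(P + Q) :=
        setIntegral_mono integrable_toReal_rnDeriv_sub_mul.restrict
          integrable_toReal_rnDeriv_sub_mul.pos_part.restrict fun ω => le_max_left _ _
    _ ≤ hockeyStick α P Q :=
        setIntegral_le_integral integrable_toReal_rnDeriv_sub_mul.pos_part
          (.of_forall fun ω => le_max_right _ _)

lemma exists_hockeyStick_eq :
    ∃ E, MeasurableSet E ∧ hockeyStick α P Q = P.real E - α * Q.real E := by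
  set f : Ω → ℝ := fun ω => (P.rnDeriv (P + Q) ω).toReal - α * (Q.rnDeriv (P + Q) ω).toReal
  have hf : Measurable f := ((P.measurable_rnDeriv _).ennreal_toReal).sub
    (((Q.measurable_rnDeriv _).ennreal_toReal).const_mul α)
  refine ⟨{ω | 0 < f ω}, measurableSet_lt measurable_const hf, ?_⟩
  have hpos : (fun ω => max (f ω) 0) = {ω | 0 < f ω}.indicator f := by
    ext ω
    by_cases h : 0 < f ω
    · simp [h, h.le]
    · simp [h, not_lt.mp h]
  rw [← setIntegral_toReal_rnDeriv_sub_mul, ← integral_indicator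
    (measurableSet_lt measurable_const hf), ← hpos, hockeyStick]

lemma hockeyStick_le_iff {c : ℝ} :
    hockeyStick α P Q ≤ c ↔ ∀ E, P.real E - α * Q.real E ≤ c := by
  refine ⟨fun h E => (measureReal_sub_le_hockeyStick E).trans h, fun h => ?_⟩
  obtain ⟨E, -, hEq⟩ := exists_hockeyStick_eq (α := α) (P := P) (Q := Q)
  exact hEq ▸ h E

lemma hockeyStick_nonneg : 0 ≤ hockeyStick α P Q := by
  simpa using measureReal_sub_le_hockeyStick (α := α) (P := P) (Q := Q) ∅

end HockeyStick

section Amplification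

variable {Ω Ω' : Type*} [MeasurableSpace Ω] [MeasurableSpace Ω']

theorem hockeyStick_sum_smul_le {ι : Type*} (s : Finset ι) {w : ι → ℝ} (hw : ∀ i ∈ s, 0 ≤ w i)
    (α : ℝ) (P Q : ι → Measure Ω) [∀ i, IsFiniteMeasure (P i)] [∀ i, IsFiniteMeasure (Q i)] :
    hockeyStick α (∑ i ∈ s, ENNReal.ofReal (w i) • P i) (∑ i ∈ s, ENNReal.ofReal (w i) • Q i)
      ≤ ∑ i ∈ s, w i * hockeyStick α (P i) (Q i) := by
  refine hockeyStick_le_iff.2 fun E => ?_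
  rw [measureReal_sum_ofReal_smul s hw, measureReal_sum_ofReal_smul s hw, mul_sum,
    ← sum_sub_distrib]
  refine sum_le_sum fun i hi => ?_
  calc w i * (P i).real E - α * (w i * (Q i).real E)
      = w i * ((P i).real E - α * (Q i).real E) := by ring
    _ ≤ w i * hockeyStick α (P i) (Q i) :=
      mul_le_mul_of_nonneg_left (measureReal_sub_le_hockeyStick E) (hw i hi)

theorem hockeyStick_mix_le_of_forall_le {A B : Measure Ω} {P Q : Measure Ω'}
    [IsFiniteMeasure A] [IsFiniteMeasure B] [IsFiniteMeasure P] [IsFiniteMeasure Q]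
    {γ α : ℝ} (hγ₀ : 0 ≤ γ) (hγ₁ : γ ≤ 1) (hα : 0 ≤ α)
    (h : ∀ β, 0 ≤ β → hockeyStick β A B ≤ hockeyStick β P Q) :
    hockeyStick α A (ENNReal.ofReal (1 - γ) • A + ENNReal.ofReal γ • B)
      ≤ hockeyStick α P (ENNReal.ofReal (1 - γ) • P + ENNReal.ofReal γ • Q) := by
  have hγ : 0 ≤ 1 - γ := sub_nonneg.2 hγ₁
  refine hockeyStick_le_iff.2 fun E => ?_
  rw [measureReal_ofReal_smul_add_ofReal_smul hγ hγ₀]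
  rcases le_or_gt (1 - α * (1 - γ)) 0 with hc | hc
  · have hB : 0 ≤ α * γ * B.real E := by positivity
    nlinarith [measureReal_nonneg (μ := A) (s := E), hockeyStick_nonneg (α := α) (P := P)
      (Q := ENNReal.ofReal (1 - γ) • P + ENNReal.ofReal γ • Q)]
  · set β := α * γ / (1 - α * (1 - γ))
    have hβ : (1 - α * (1 - γ)) * β = α * γ := mul_div_cancel₀ _ hc.ne'
    obtain ⟨F, -, hPQ⟩ := exists_hockeyStick_eq (α := β) (P := P) (Q := Q)
    calc A.real E - α * ((1 - γ) * A.real E + γ * B.real E)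
        = (1 - α * (1 - γ)) * (A.real E - β * B.real E) := by linear_combination B.real E * hβ
      _ ≤ (1 - α * (1 - γ)) * (P.real F - β * Q.real F) := by
        refine mul_le_mul_of_nonneg_left ?_ hc.le
        exact (measureReal_sub_le_hockeyStick E).trans (hPQ ▸ h β (by positivity))
      _ = P.real F - α * (ENNReal.ofReal (1 - γ) • P + ENNReal.ofReal γ • Q).real F := by
        rw [measureReal_ofReal_smul_add_ofReal_smul hγ hγ₀]
        linear_combination -(Q.real F * hβ)
      _ ≤ _ := measureReal_sub_le_hockeyStick F

end Amplification

section Poisson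

variable {Z Ω : Type*} [MeasurableSpace Ω] [DecidableEq Z]

instance isFiniteMeasure_poissonSubsample (M : Finset Z → Measure Ω)
    [∀ T, IsFiniteMeasure (M T)] (γ : ℝ) (D : Finset Z) :
    IsFiniteMeasure (poissonSubsample M γ D) := by
  unfold poissonSubsample
  infer_instance

lemma poissonSubsample_insert (M : Finset Z → Measure Ω) {γ : ℝ} (hγ₀ : 0 ≤ γ) (hγ₁ : γ ≤ 1)
    {S : Finset Z} {x : Z} (hx : x ∉ S) :
    poissonSubsample M γ (insert x S) =
      ENNReal.ofReal (1 - γ) • poissonSubsample M γ S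
        + ENNReal.ofReal γ • poissonSubsample (fun T => M (insert x T)) γ S := by
  have hxT : ∀ T ∈ S.powerset, x ∉ T := fun T hT h => hx (mem_powerset.1 hT h)
  have hcard : ∀ T ∈ S.powerset, T.card ≤ S.card := fun T hT => card_le_card (mem_powerset.1 hT)
  unfold poissonSubsample
  rw [powerset_insert, sum_union (disjoint_left.2 fun T hT hT' => ?_), smul_sum, smul_sum,
    sum_image fun T hT U hU hTU => ?_]
  · congr 1 <;> refine sum_congr rfl fun T hT => ?_ <;>
      rw [smul_smul, ← ENNReal.ofReal_mul (by linarith), card_insert_of_notMem hx]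
    · rw [Nat.succ_sub (hcard T hT), pow_succ]
      congr 2
      ring
    · rw [card_insert_of_notMem (hxT T hT), Nat.succ_sub_succ, pow_succ]
      congr 2
      ring
  · rw [← erase_insert (hxT T hT), ← erase_insert (hxT U hU), hTU]
  · obtain ⟨U, -, rfl⟩ := mem_image.1 hT'
    exact hxT _ hT (mem_insert_self x U)

end Poisson

/-- Privacy amplification by Poisson sampling: if `(P,Q)` dominates `M` for add neighbors,
then `(P, (1−γ)P + γQ)` dominates the Poisson-subsampled mechanism for add neighbors. -/
theorem poisson_subsampling_amplification
    {Z Ω Ω' : Type*} [MeasurableSpace Ω] [MeasurableSpace Ω'] [DecidableEq Z]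
    (M : Finset Z → Measure Ω) (hM : ∀ S, IsProbabilityMeasure (M S))
    (γ : ℝ) (hγ : γ ∈ Set.Icc (0:ℝ) 1)
    (P Q : Measure Ω') [IsProbabilityMeasure P] [IsProbabilityMeasure Q]
    (hdom : ∀ α : ℝ, 0 ≤ α → ∀ (S : Finset Z) (x : Z), x ∉ S →
      hockeyStick α (M S) (M (insert x S)) ≤ hockeyStick α P Q) :
    ∀ α : ℝ, 0 ≤ α → ∀ (S : Finset Z) (x : Z), x ∉ S →
      hockeyStick α (poissonSubsample M γ S) (poissonSubsample M γ (insert x S))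
        ≤ hockeyStick α P (ENNReal.ofReal (1 - γ) • P + ENNReal.ofReal γ • Q) := by
  obtain ⟨hγ₀, hγ₁⟩ := hγ
  intro α hα S x hx
  have hw : ∀ T ∈ S.powerset, 0 ≤ γ ^ T.card * (1 - γ) ^ (S.card - T.card) :=
    fun T _ => mul_nonneg (pow_nonneg hγ₀ _) (pow_nonneg (sub_nonneg.2 hγ₁) _)
  rw [poissonSubsample_insert M hγ₀ hγ₁ hx]
  refine hockeyStick_mix_le_of_forall_le hγ₀ hγ₁ hα fun β hβ => ?_
  calc hockeyStick β (poissonSubsample M γ S) (poissonSubsample (fun T => M (insert x T)) γ S)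
      ≤ ∑ T ∈ S.powerset, γ ^ T.card * (1 - γ) ^ (S.card - T.card)
          * hockeyStick β (M T) (M (insert x T)) :=
        hockeyStick_sum_smul_le _ hw β _ _
    _ ≤ ∑ T ∈ S.powerset, γ ^ T.card * (1 - γ) ^ (S.card - T.card) * hockeyStick β P Q :=
        sum_le_sum fun T hT => mul_le_mul_of_nonneg_left
          (hdom β hβ T x fun h => hx (mem_powerset.1 hT h)) (hw T hT)
    _ = hockeyStick β P Q := by
        rw [← sum_mul, sum_pow_mul_eq_add_pow, add_sub_cancel, one_pow, one_mul]
end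

section
/- Composition rule for characteristic functions of privacy loss: let P, Q be mutually absolutely continuous probability measures on a measurable space Ω₁ and P', Q' mutually absolutely continuous probability measures on a measurable space Ω₂. Then for every t ∈ ℝ, the characteristic function of the privacy loss of the product pair factorizes: φ_{P×P', Q×Q'}(t) = φ_{P,Q}(t) · φ_{P',Q'}(t), where P×P' and Q×Q' are product measures on Ω₁ × Ω₂. -/
open MeasureTheory

/-- The characteristic function of the privacy loss random variable:
`φ_{P,Q}(t) = ∫ exp(i·t·log((dP/dQ)(ω))) dP(ω)`. -/
noncomputable def privacyLossCharFun {Ω : Type*} [MeasurableSpace Ω]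
    (P Q : Measure Ω) (t : ℝ) : ℂ :=
  ∫ ω, Complex.exp (Complex.I * t * (Real.log ((P.rnDeriv Q ω).toReal) : ℂ)) ∂P

lemma rnDeriv_prod_aux {Ω₁ Ω₂ : Type*} [MeasurableSpace Ω₁] [MeasurableSpace Ω₂]
    (P Q : Measure Ω₁) [IsProbabilityMeasure P] [IsProbabilityMeasure Q]
    (P' Q' : Measure Ω₂) [IsProbabilityMeasure P'] [IsProbabilityMeasure Q']
    (hPQ : P ≪ Q) (hPQ' : P' ≪ Q') :
    (fun p : Ω₁ × Ω₂ => P.rnDeriv Q p.1 * P'.rnDeriv Q' p.2)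
      =ᵐ[Q.prod Q'] (P.prod P').rnDeriv (Q.prod Q') := by
  have hf := Measure.measurable_rnDeriv P Q
  have hg := Measure.measurable_rnDeriv P' Q'
  refine Measure.eq_rnDeriv (μ := P.prod P') (s := 0)
    ((hf.comp measurable_fst).mul (hg.comp measurable_snd))
    Measure.MutuallySingular.zero_left ?_
  rw [zero_add]
  refine Measure.prod_eq fun s t hs ht => ?_
  rw [withDensity_apply _ (hs.prod ht), ← Measure.prod_restrict,
    lintegral_prod_mul hf.aemeasurable hg.aemeasurable,
    Measure.setLIntegral_rnDeriv hPQ, Measure.setLIntegral_rnDeriv hPQ']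

/-- Composition rule for characteristic functions of privacy loss: for mutually absolutely
continuous pairs `(P,Q)` and `(P',Q')`,
`φ_{P×P', Q×Q'}(t) = φ_{P,Q}(t) · φ_{P',Q'}(t)` for every `t ∈ ℝ`. -/
theorem privacyLossCharFun_prod
    {Ω₁ Ω₂ : Type*} [MeasurableSpace Ω₁] [MeasurableSpace Ω₂]
    (P Q : Measure Ω₁) [IsProbabilityMeasure P] [IsProbabilityMeasure Q]
    (P' Q' : Measure Ω₂) [IsProbabilityMeasure P'] [IsProbabilityMeasure Q']
    (hPQ : P ≪ Q) (hQP : Q ≪ P) (hPQ' : P' ≪ Q') (hQP' : Q' ≪ P') :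
    ∀ t : ℝ,
      privacyLossCharFun (P.prod P') (Q.prod Q') t
        = privacyLossCharFun P Q t * privacyLossCharFun P' Q' t := by
  intro t
  have hprod : P.prod P' ≪ Q.prod Q' := hPQ.prod hPQ'
  have hrn : (fun p : Ω₁ × Ω₂ => P.rnDeriv Q p.1 * P'.rnDeriv Q' p.2)
      =ᵐ[P.prod P'] (P.prod P').rnDeriv (Q.prod Q') :=
    hprod (rnDeriv_prod_aux P Q P' Q' hPQ hPQ')
  -- positivity and finiteness a.e.
  have h1 : ∀ᵐ x ∂P, 0 < P.rnDeriv Q x ∧ P.rnDeriv Q x < ⊤ := by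
    filter_upwards [Measure.rnDeriv_pos hPQ, hPQ.ae_le (Measure.rnDeriv_lt_top P Q)]
      with x h h' using ⟨h, h'⟩
  have h2 : ∀ᵐ x ∂P', 0 < P'.rnDeriv Q' x ∧ P'.rnDeriv Q' x < ⊤ := by
    filter_upwards [Measure.rnDeriv_pos hPQ', hPQ'.ae_le (Measure.rnDeriv_lt_top P' Q')]
      with x h h' using ⟨h, h'⟩
  have hmapfst : (P.prod P').map Prod.fst = P := by
    simp [Measure.map_fst_prod]
  have hmapsnd : (P.prod P').map Prod.snd = P' := by
    simp [Measure.map_snd_prod]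
  have h1' : ∀ᵐ p : Ω₁ × Ω₂ ∂P.prod P',
      0 < P.rnDeriv Q p.1 ∧ P.rnDeriv Q p.1 < ⊤ := by
    have h1m : ∀ᵐ x ∂((P.prod P').map Prod.fst),
        0 < P.rnDeriv Q x ∧ P.rnDeriv Q x < ⊤ := by rw [hmapfst]; exact h1
    exact ae_of_ae_map measurable_fst.aemeasurable h1m
  have h2' : ∀ᵐ p : Ω₁ × Ω₂ ∂P.prod P',
      0 < P'.rnDeriv Q' p.2 ∧ P'.rnDeriv Q' p.2 < ⊤ := by
    have h2m : ∀ᵐ x ∂((P.prod P').map Prod.snd),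
        0 < P'.rnDeriv Q' x ∧ P'.rnDeriv Q' x < ⊤ := by rw [hmapsnd]; exact h2
    exact ae_of_ae_map measurable_snd.aemeasurable h2m
  have hcongr : (fun p : Ω₁ × Ω₂ =>
      Complex.exp (Complex.I * t *
        (Real.log (((P.prod P').rnDeriv (Q.prod Q') p).toReal) : ℂ)))
      =ᵐ[P.prod P'] fun p =>
        Complex.exp (Complex.I * t * (Real.log ((P.rnDeriv Q p.1).toReal) : ℂ)) *
        Complex.exp (Complex.I * t * (Real.log ((P'.rnDeriv Q' p.2).toReal) : ℂ)) := by
    filter_upwards [hrn, h1', h2'] with p hp hp1 hp2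
    rw [← hp, ENNReal.toReal_mul, Real.log_mul, ← Complex.exp_add]
    · push_cast
      ring_nf
    · exact ne_of_gt (ENNReal.toReal_pos hp1.1.ne' hp1.2.ne)
    · exact ne_of_gt (ENNReal.toReal_pos hp2.1.ne' hp2.2.ne)
  unfold privacyLossCharFun
  rw [integral_congr_ae hcongr]
  exact integral_prod_mul (μ := P) (ν := P')
    (fun x => Complex.exp (Complex.I * t * (Real.log ((P.rnDeriv Q x).toReal) : ℂ)))
    (fun y => Complex.exp (Complex.I * t * (Real.log ((P'.rnDeriv Q' y).toReal) : ℂ)))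
end

section
/- Hockey-stick divergence as the convex conjugate of the trade-off function: let P, Q be probability measures on a common measurable space with trade-off function f = T[P,Q]. Then for every ε ∈ ℝ, H_{e^ε}(Q‖P) = 1 + sup_{x ∈ [0,1]} (−e^ε · x − f(x)), i.e. H_{e^ε}(Q‖P) = 1 + f*(−e^ε) where f* is the Fenchel conjugate of f. -/
open MeasureTheory

section Aux

variable {Ω : Type*} [MeasurableSpace Ω]

/-- Integrability of a `[0,1]`-valued measurable function against a finite measure. -/
lemma integrable_of_test {φ : Ω → ℝ} (hφ : Measurable φ)
    (h01 : ∀ ω, φ ω ∈ Set.Icc (0:ℝ) 1) (ν : Measure Ω) [IsFiniteMeasure ν] :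
    Integrable φ ν := by
  refine Integrable.mono' (integrable_const 1) hφ.aestronglyMeasurable ?_
  filter_upwards with ω
  rw [Real.norm_eq_abs, abs_le]
  exact ⟨by linarith [(h01 ω).1], (h01 ω).2⟩

lemma integral_test_eq (P Q : Measure Ω) [IsProbabilityMeasure P] [IsProbabilityMeasure Q]
    (α : ℝ) {φ : Ω → ℝ} (hφ : Measurable φ) (h01 : ∀ ω, φ ω ∈ Set.Icc (0:ℝ) 1) :
    (∫ ω, φ ω ∂Q) - α * ∫ ω, φ ω ∂P
      = ∫ ω, φ ω * ((Q.rnDeriv (Q + P) ω).toReal - α * (P.rnDeriv (Q + P) ω).toReal)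
          ∂(Q + P) := by
  set μ := Q + P with hμ
  have hQ : Q ≪ μ := Measure.absolutelyContinuous_of_le (Measure.le_add_right le_rfl)
  have hP : P ≪ μ := Measure.absolutelyContinuous_of_le (Measure.le_add_left le_rfl)
  have hq : Measurable fun ω => (Q.rnDeriv μ ω).toReal :=
    (Measure.measurable_rnDeriv Q μ).ennreal_toReal
  have hp : Measurable fun ω => (P.rnDeriv μ ω).toReal :=
    (Measure.measurable_rnDeriv P μ).ennreal_toReal
  have Iq : Integrable (fun ω => (Q.rnDeriv μ ω).toReal) μ := Measure.integrable_toReal_rnDeriv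
  have Ip : Integrable (fun ω => (P.rnDeriv μ ω).toReal) μ := Measure.integrable_toReal_rnDeriv
  have habs : ∀ ω, |φ ω| ≤ 1 := fun ω => abs_le.mpr ⟨by linarith [(h01 ω).1], (h01 ω).2⟩
  have Iφq : Integrable (fun ω => φ ω * (Q.rnDeriv μ ω).toReal) μ := by
    refine Integrable.mono' Iq ((hφ.mul hq).aestronglyMeasurable) ?_
    filter_upwards with ω
    rw [Real.norm_eq_abs, abs_mul]
    calc |φ ω| * |(Q.rnDeriv μ ω).toReal| ≤ 1 * |(Q.rnDeriv μ ω).toReal| :=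
          mul_le_mul_of_nonneg_right (habs ω) (abs_nonneg _)
      _ = (Q.rnDeriv μ ω).toReal := by rw [one_mul, abs_of_nonneg ENNReal.toReal_nonneg]
  have Iφp : Integrable (fun ω => φ ω * (P.rnDeriv μ ω).toReal) μ := by
    refine Integrable.mono' Ip ((hφ.mul hp).aestronglyMeasurable) ?_
    filter_upwards with ω
    rw [Real.norm_eq_abs, abs_mul]
    calc |φ ω| * |(P.rnDeriv μ ω).toReal| ≤ 1 * |(P.rnDeriv μ ω).toReal| :=
          mul_le_mul_of_nonneg_right (habs ω) (abs_nonneg _)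
      _ = (P.rnDeriv μ ω).toReal := by rw [one_mul, abs_of_nonneg ENNReal.toReal_nonneg]
  have eQ : (∫ ω, φ ω ∂Q) = ∫ ω, φ ω * (Q.rnDeriv μ ω).toReal ∂μ := by
    rw [← integral_rnDeriv_smul hQ (f := φ)]
    congr 1; funext ω; simp [mul_comm]
  have eP : (∫ ω, φ ω ∂P) = ∫ ω, φ ω * (P.rnDeriv μ ω).toReal ∂μ := by
    rw [← integral_rnDeriv_smul hP (f := φ)]
    congr 1; funext ω; simp [mul_comm]
  rw [eQ, eP]
  have : ∀ ω, φ ω * ((Q.rnDeriv μ ω).toReal - α * (P.rnDeriv μ ω).toReal)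
      = φ ω * (Q.rnDeriv μ ω).toReal - α * (φ ω * (P.rnDeriv μ ω).toReal) := by
    intro ω; ring
  simp_rw [this]
  rw [integral_sub Iφq (Iφp.const_mul α), integral_const_mul]

lemma test_le_hockeyStick (P Q : Measure Ω) [IsProbabilityMeasure P] [IsProbabilityMeasure Q]
    (α : ℝ) {φ : Ω → ℝ} (hφ : Measurable φ) (h01 : ∀ ω, φ ω ∈ Set.Icc (0:ℝ) 1) :
    (∫ ω, φ ω ∂Q) - α * ∫ ω, φ ω ∂P ≤ hockeyStick α Q P := by
  rw [integral_test_eq P Q α hφ h01]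
  unfold hockeyStick
  set μ := Q + P with hμ
  have hq : Measurable fun ω => (Q.rnDeriv μ ω).toReal :=
    (Measure.measurable_rnDeriv Q μ).ennreal_toReal
  have hp : Measurable fun ω => (P.rnDeriv μ ω).toReal :=
    (Measure.measurable_rnDeriv P μ).ennreal_toReal
  have Iq : Integrable (fun ω => (Q.rnDeriv μ ω).toReal) μ := Measure.integrable_toReal_rnDeriv
  have Ip : Integrable (fun ω => (P.rnDeriv μ ω).toReal) μ := Measure.integrable_toReal_rnDeriv
  set g : Ω → ℝ := fun ω => (Q.rnDeriv μ ω).toReal - α * (P.rnDeriv μ ω).toReal with hg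
  have hgm : Measurable g := hq.sub (hp.const_mul α)
  have Ig : Integrable g μ := Iq.sub (Ip.const_mul α)
  have habs : ∀ ω, |φ ω| ≤ 1 := fun ω => abs_le.mpr ⟨by linarith [(h01 ω).1], (h01 ω).2⟩
  have Iφg : Integrable (fun ω => φ ω * g ω) μ := by
    refine Integrable.mono' Ig.abs ((hφ.mul hgm).aestronglyMeasurable) ?_
    filter_upwards with ω
    rw [Real.norm_eq_abs, abs_mul]
    calc |φ ω| * |g ω| ≤ 1 * |g ω| := mul_le_mul_of_nonneg_right (habs ω) (abs_nonneg _)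
      _ = |g ω| := one_mul _
  refine integral_mono Iφg Ig.pos_part ?_
  intro ω
  have h0 := (h01 ω).1
  have h1 := (h01 ω).2
  rcases le_total (g ω) 0 with h | h
  · have : φ ω * g ω ≤ 0 := mul_nonpos_of_nonneg_of_nonpos h0 h
    simpa [le_max_iff] using Or.inr this
  · calc φ ω * g ω ≤ 1 * g ω := mul_le_mul_of_nonneg_right h1 h
      _ = g ω := one_mul _
      _ ≤ max (g ω) 0 := le_max_left _ _

lemma exists_optimal_test (P Q : Measure Ω) [IsProbabilityMeasure P] [IsProbabilityMeasure Q]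
    (α : ℝ) :
    ∃ φ : Ω → ℝ, Measurable φ ∧ (∀ ω, φ ω ∈ Set.Icc (0:ℝ) 1) ∧
      (∫ ω, φ ω ∂Q) - α * ∫ ω, φ ω ∂P = hockeyStick α Q P := by
  set μ := Q + P with hμ
  have hq : Measurable fun ω => (Q.rnDeriv μ ω).toReal :=
    (Measure.measurable_rnDeriv Q μ).ennreal_toReal
  have hp : Measurable fun ω => (P.rnDeriv μ ω).toReal :=
    (Measure.measurable_rnDeriv P μ).ennreal_toReal
  set g : Ω → ℝ := fun ω => (Q.rnDeriv μ ω).toReal - α * (P.rnDeriv μ ω).toReal with hg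
  have hgm : Measurable g := hq.sub (hp.const_mul α)
  set A : Set Ω := {ω | 0 < g ω} with hA
  have hAm : MeasurableSet A := measurableSet_lt measurable_const hgm
  refine ⟨A.indicator (fun _ => 1), (measurable_const (a := (1:ℝ))).indicator hAm, ?_, ?_⟩
  · intro ω
    by_cases h : ω ∈ A
    · simp [Set.indicator_of_mem h]
    · simp [Set.indicator_of_notMem h]
  · have h01 : ∀ ω, A.indicator (fun _ => (1:ℝ)) ω ∈ Set.Icc (0:ℝ) 1 := by
      intro ω
      by_cases h : ω ∈ A
      · simp [Set.indicator_of_mem h]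
      · simp [Set.indicator_of_notMem h]
    rw [integral_test_eq P Q α ((measurable_const (a := (1:ℝ))).indicator hAm) h01]
    unfold hockeyStick
    congr 1
    funext ω
    by_cases h : ω ∈ A
    · have hgt : 0 < g ω := h
      simp only [Set.indicator_of_mem h, one_mul]
      exact (max_eq_left hgt.le).symm
    · have hle : g ω ≤ 0 := not_lt.mp h
      simp only [Set.indicator_of_notMem h, zero_mul]
      exact (max_eq_right hle).symm

end Aux

/-- Hockey-stick divergence as the convex conjugate of the trade-off function `f = T[P,Q]`:
`H_{e^ε}(Q‖P) = 1 + sup_{x ∈ [0,1]} (−e^ε·x − f(x)) = 1 + f*(−e^ε)`. -/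
theorem hockeyStick_eq_fenchel_tradeOff
    {Ω : Type*} [MeasurableSpace Ω]
    (P Q : Measure Ω) [IsProbabilityMeasure P] [IsProbabilityMeasure Q] :
    ∀ ε : ℝ,
      hockeyStick (Real.exp ε) Q P
        = 1 + sSup {r : ℝ | ∃ x ∈ Set.Icc (0:ℝ) 1,
            r = -(Real.exp ε) * x - tradeOff P Q x} := by
  intro ε
  set E := Real.exp ε with hE
  have hEpos : 0 < E := Real.exp_pos ε
  set H := hockeyStick E Q P with hH
  set S := {r : ℝ | ∃ x ∈ Set.Icc (0:ℝ) 1, r = -E * x - tradeOff P Q x} with hS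
  -- the feasible set for tradeOff at level x (for x ≥ 0) is nonempty and bounded below
  have hT_set : ∀ x : ℝ, 0 ≤ x →
      ({r : ℝ | ∃ φ : Ω → ℝ, Measurable φ ∧ (∀ ω, φ ω ∈ Set.Icc (0:ℝ) 1) ∧
        (∫ ω, φ ω ∂P) ≤ x ∧ r = ∫ ω, (1 - φ ω) ∂Q}).Nonempty := by
    intro x hx
    refine ⟨∫ ω, ((1:ℝ) - 0) ∂Q, fun _ => 0, measurable_const, ?_, by simp [hx], rfl⟩
    intro ω; exact ⟨le_rfl, zero_le_one⟩
  -- lower bound on tradeOff : for all 0 ≤ x, 1 - H - E * x ≤ tradeOff P Q x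
  have hT_lb : ∀ x : ℝ, 0 ≤ x → 1 - H - E * x ≤ tradeOff P Q x := by
    intro x hx
    refine le_csInf (hT_set x hx) ?_
    rintro r ⟨φ, hφ, h01, hφP, rfl⟩
    have Iφ : Integrable φ Q := integrable_of_test hφ h01 Q
    have hsub : (∫ ω, (1 - φ ω) ∂Q) = 1 - ∫ ω, φ ω ∂Q := by
      rw [integral_sub (integrable_const 1) Iφ]
      simp
    have hkey : (∫ ω, φ ω ∂Q) - E * ∫ ω, φ ω ∂P ≤ H := test_le_hockeyStick P Q E hφ h01
    have hQx : (∫ ω, φ ω ∂Q) ≤ H + E * x := by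
      have : E * (∫ ω, φ ω ∂P) ≤ E * x := mul_le_mul_of_nonneg_left hφP hEpos.le
      linarith
    rw [hsub]; linarith
  -- membership tool: tradeOff feasible sets are bounded below by 0
  have hT_bdd : ∀ x : ℝ, BddBelow {r : ℝ | ∃ φ : Ω → ℝ, Measurable φ ∧
      (∀ ω, φ ω ∈ Set.Icc (0:ℝ) 1) ∧ (∫ ω, φ ω ∂P) ≤ x ∧ r = ∫ ω, (1 - φ ω) ∂Q} := by
    intro x
    refine ⟨0, ?_⟩
    rintro r ⟨φ, hφ, h01, hφP, rfl⟩
    exact integral_nonneg fun ω => by simpa using sub_nonneg.mpr (h01 ω).2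
  -- get the optimal test
  obtain ⟨φ₀, hφ₀, h01₀, hopt⟩ := exists_optimal_test P Q E
  have Iφ₀P : Integrable φ₀ P := integrable_of_test hφ₀ h01₀ P
  have Iφ₀Q : Integrable φ₀ Q := integrable_of_test hφ₀ h01₀ Q
  set x₀ : ℝ := ∫ ω, φ₀ ω ∂P with hx₀
  have hx₀0 : 0 ≤ x₀ := integral_nonneg fun ω => (h01₀ ω).1
  have hx₀1 : x₀ ≤ 1 := by
    have : (∫ ω, φ₀ ω ∂P) ≤ ∫ _, (1:ℝ) ∂P :=
      integral_mono Iφ₀P (integrable_const 1) fun ω => (h01₀ ω).2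
    simpa using this
  -- tradeOff P Q x₀ ≤ 1 - ∫ φ₀ dQ
  have hT_ub : tradeOff P Q x₀ ≤ 1 - ∫ ω, φ₀ ω ∂Q := by
    have hmem : (∫ ω, (1 - φ₀ ω) ∂Q) ∈ {r : ℝ | ∃ φ : Ω → ℝ, Measurable φ ∧
        (∀ ω, φ ω ∈ Set.Icc (0:ℝ) 1) ∧ (∫ ω, φ ω ∂P) ≤ x₀ ∧ r = ∫ ω, (1 - φ ω) ∂Q} :=
      ⟨φ₀, hφ₀, h01₀, le_rfl, rfl⟩
    have hsub : (∫ ω, (1 - φ₀ ω) ∂Q) = 1 - ∫ ω, φ₀ ω ∂Q := by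
      rw [integral_sub (integrable_const 1) Iφ₀Q]; simp
    have := csInf_le (hT_bdd x₀) hmem
    rw [hsub] at this
    exact this
  -- S is nonempty and bounded above by H - 1
  set r₀ : ℝ := -E * x₀ - tradeOff P Q x₀ with hr₀
  have hr₀S : r₀ ∈ S := ⟨x₀, ⟨hx₀0, hx₀1⟩, rfl⟩
  have hSbdd : ∀ r ∈ S, r ≤ H - 1 := by
    rintro r ⟨x, ⟨hx0, _⟩, rfl⟩
    have := hT_lb x hx0
    linarith
  have h1 : sSup S ≤ H - 1 := csSup_le ⟨r₀, hr₀S⟩ hSbdd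
  have h2 : H - 1 ≤ sSup S := by
    have hr₀ge : H - 1 ≤ r₀ := by
      have : H = (∫ ω, φ₀ ω ∂Q) - E * x₀ := hopt.symm
      rw [hr₀]
      linarith [hT_ub]
    exact le_trans hr₀ge (le_csSup ⟨H - 1, hSbdd⟩ hr₀S)
  have : sSup S = H - 1 := le_antisymm h1 h2
  rw [this]; ring
end

section
/- Neyman–Pearson relation between the trade-off function and the privacy-loss CDFs: let P, Q be mutually absolutely continuous probability measures, let F(x) = P({ω : log((dQ/dP)(ω)) ≤ x}) and G(x) = Q({ω : log((dQ/dP)(ω)) ≤ x}), and let f = T[P,Q]. Then for every x ∈ ℝ, f(1 − F(x)) = G(x). In other words, 1 − F(x) and G(x) are respectively the type I and type II errors of the likelihood ratio test with threshold x, and this test achieves the optimal trade-off. -/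
/-!
Let `A = {log (dQ/dP) ≤ x}`, so that `dQ/dP ≤ eˣ` on `A` and `dQ/dP > eˣ` off `A`. The test
rejecting exactly off `A` has type I error `1 - F x` and type II error `G x`. For any other test
`φ` of type I error at most `1 - F x`, the function `g = 1_{Aᶜ} - φ` has the sign of
`dQ/dP - eˣ`, hence `∫ g dQ = ∫ (dQ/dP) g dP ≥ eˣ ∫ g dP ≥ 0`, which says that the type II error
of `φ` is at least `G x` (the Neyman–Pearson lemma).
-/

open MeasureTheory

open Set

section LikelihoodRatio

variable {Ω : Type*} [MeasurableSpace Ω]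

lemma integrable_of_mem_Icc {μ : Measure Ω} [IsFiniteMeasure μ] {f : Ω → ℝ} (hf : Measurable f)
    (hf01 : ∀ ω, f ω ∈ Icc (0 : ℝ) 1) : Integrable f μ :=
  Integrable.of_bound hf.aestronglyMeasurable 1 <| .of_forall fun ω => by
    rw [Real.norm_eq_abs, abs_le]
    exact ⟨by linarith [(hf01 ω).1], (hf01 ω).2⟩

section NeymanPearson

variable {P Q : Measure Ω} [IsFiniteMeasure P] [IsFiniteMeasure Q] {A : Set Ω} {k : ℝ}

/-- The Neyman–Pearson lemma: a likelihood ratio test with acceptance region `A` and threshold `k`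
has the least type II error among the tests of no larger type I error. -/
theorem measureReal_le_integral_one_sub_of_likelihoodRatio (hQP : Q ≪ P) (hA : MeasurableSet A)
    (hk : 0 ≤ k) (hle : ∀ᵐ ω ∂P, ω ∈ A → (Q.rnDeriv P ω).toReal ≤ k)
    (hge : ∀ᵐ ω ∂P, ω ∉ A → k ≤ (Q.rnDeriv P ω).toReal)
    {φ : Ω → ℝ} (hφ : Measurable φ) (hφ01 : ∀ ω, φ ω ∈ Icc (0 : ℝ) 1)
    (hsize : ∫ ω, φ ω ∂P ≤ P.real Aᶜ) :
    Q.real A ≤ ∫ ω, (1 - φ ω) ∂Q := by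
  set r : Ω → ℝ := fun ω => (Q.rnDeriv P ω).toReal
  set g : Ω → ℝ := fun ω => Aᶜ.indicator 1 ω - φ ω with hg_def
  have hg : ∀ {μ : Measure Ω} [IsFiniteMeasure μ], Integrable g μ ∧
      ∫ ω, g ω ∂μ = μ.real Aᶜ - ∫ ω, φ ω ∂μ := fun {μ} _ => by
    have hind : Integrable (Aᶜ.indicator (1 : Ω → ℝ)) μ := (integrable_const 1).indicator hA.compl
    have hφμ : Integrable φ μ := integrable_of_mem_Icc hφ hφ01
    exact ⟨hind.sub hφμ, by rw [hg_def, integral_sub hind hφμ, integral_indicator_one hA.compl]⟩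
  have hsign : ∀ᵐ ω ∂P, k * g ω ≤ r ω * g ω := by
    filter_upwards [hle, hge] with ω hωle hωge
    by_cases hω : ω ∈ A
    · have : g ω = -φ ω := by simp [hg_def, hω]
      rw [this]
      exact mul_le_mul_of_nonpos_right (hωle hω) (by linarith [(hφ01 ω).1])
    · have : g ω = 1 - φ ω := by simp [hg_def, hω]
      rw [this]
      exact mul_le_mul_of_nonneg_right (hωge hω) (by linarith [(hφ01 ω).2])
  have hgQ : 0 ≤ ∫ ω, g ω ∂Q :=
    calc 0 ≤ k * ∫ ω, g ω ∂P := mul_nonneg hk (by linarith [hg (μ := P)])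
      _ = ∫ ω, k * g ω ∂P := (integral_const_mul k g).symm
      _ ≤ ∫ ω, r ω * g ω ∂P :=
        integral_mono_ae (hg.1.const_mul k) ((integrable_rnDeriv_smul_iff hQP).mpr hg.1) hsign
      _ = ∫ ω, g ω ∂Q := integral_rnDeriv_smul hQP
  have hφQ : ∫ ω, (1 - φ ω) ∂Q = Q.real univ - ∫ ω, φ ω ∂Q := by
    rw [integral_sub (integrable_const 1) (integrable_of_mem_Icc hφ hφ01), integral_const]
    simp
  linarith [hg (μ := Q).2, measureReal_compl (μ := Q) hA]

theorem tradeOff_measureReal_compl_of_likelihoodRatio (hQP : Q ≪ P) (hA : MeasurableSet A)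
    (hk : 0 ≤ k) (hle : ∀ᵐ ω ∂P, ω ∈ A → (Q.rnDeriv P ω).toReal ≤ k)
    (hge : ∀ᵐ ω ∂P, ω ∉ A → k ≤ (Q.rnDeriv P ω).toReal) :
    tradeOff P Q (P.real Aᶜ) = Q.real A := by
  refine IsLeast.csInf_eq ⟨⟨Aᶜ.indicator 1, measurable_const.indicator hA.compl,
    fun ω => ?_, (integral_indicator_one hA.compl).le, ?_⟩, ?_⟩
  · by_cases hω : ω ∈ A <;> simp [hω]
  · have hA_ind : ∀ ω, 1 - Aᶜ.indicator 1 ω = A.indicator (1 : Ω → ℝ) ω := fun ω => by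
      by_cases hω : ω ∈ A <;> simp [hω]
    simp_rw [hA_ind, integral_indicator_one hA]
  · rintro _ ⟨φ, hφ, hφ01, hsize, rfl⟩
    exact measureReal_le_integral_one_sub_of_likelihoodRatio hQP hA hk hle hge hφ hφ01 hsize

end NeymanPearson

lemma ae_log_rnDeriv_le_iff {P Q : Measure Ω} [SigmaFinite P] [SigmaFinite Q]
    (hPQ : P ≪ Q) (x : ℝ) :
    ∀ᵐ ω ∂P, Real.log (Q.rnDeriv P ω).toReal ≤ x ↔ (Q.rnDeriv P ω).toReal ≤ Real.exp x := by
  filter_upwards [Measure.rnDeriv_pos' hPQ, Measure.rnDeriv_lt_top Q P] with ω hpos hfin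
  exact Real.log_le_iff_le_exp (ENNReal.toReal_pos hpos.ne' hfin.ne)

end LikelihoodRatio

/-- Neyman–Pearson relation between the trade-off function and the privacy-loss CDFs:
with `F(x) = P(log(dQ/dP) ≤ x)`, `G(x) = Q(log(dQ/dP) ≤ x)` and `f = T[P,Q]`,
`f(1 − F(x)) = G(x)` for every `x ∈ ℝ`. -/
theorem tradeOff_likelihood_ratio_cdf
    {Ω : Type*} [MeasurableSpace Ω]
    (P Q : Measure Ω) [IsProbabilityMeasure P] [IsProbabilityMeasure Q]
    (hPQ : P ≪ Q) (hQP : Q ≪ P)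
    (F G : ℝ → ℝ)
    (hF : ∀ x : ℝ, F x = (P {ω | Real.log ((Q.rnDeriv P ω).toReal) ≤ x}).toReal)
    (hG : ∀ x : ℝ, G x = (Q {ω | Real.log ((Q.rnDeriv P ω).toReal) ≤ x}).toReal) :
    ∀ x : ℝ, tradeOff P Q (1 - F x) = G x := by
  intro x
  set A := {ω | Real.log ((Q.rnDeriv P ω).toReal) ≤ x}
  have hA : MeasurableSet A :=
    measurableSet_le (Measure.measurable_rnDeriv Q P).ennreal_toReal.log measurable_const
  have hsize : 1 - F x = P.real Aᶜ := by rw [hF, probReal_compl_eq_one_sub hA]; rfl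
  rw [hsize, hG, tradeOff_measureReal_compl_of_likelihoodRatio hQP hA (Real.exp_pos x).le]
  · rfl
  · filter_upwards [ae_log_rnDeriv_le_iff hPQ x] with ω hω hωA using hω.mp hωA
  · filter_upwards [ae_log_rnDeriv_le_iff hPQ x] with ω hω hωA
    exact (not_le.mp (hωA ∘ hω.mpr)).le
end

section
/- Half-range dominance equivalence for symmetric neighboring relations: let M be a mechanism mapping datasets (from a set equipped with a symmetric neighboring relation ≃, i.e. D ≃ D' implies D' ≃ D) to probability measures, and let P, Q be probability measures on a common measurable space. Then the following are equivalent: (a) H_α(M(D)‖M(D')) ≤ H_α(P‖Q) for all α ≥ 1 and all D ≃ D'; (b) H_α(M(D)‖M(D')) ≤ H_α(Q‖P) for all α with 0 < α ≤ 1 and all D ≃ D'. -/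
open MeasureTheory

lemma absCont_add_right {Ω : Type*} [MeasurableSpace Ω] (P Q : Measure Ω) : P ≪ P + Q :=
  Measure.AbsolutelyContinuous.mk fun s _ hs => by
    simp [Measure.add_apply] at hs; exact hs.1

/-- Inversion identity: `H_α(P‖Q) = 1 - α + α * H_{α⁻¹}(Q‖P)` for probability measures. -/
lemma hockeyStick_inv {Ω : Type*} [MeasurableSpace Ω] (P Q : Measure Ω)
    [IsProbabilityMeasure P] [IsProbabilityMeasure Q] {α : ℝ} (hα : 0 < α) :
    hockeyStick α P Q = 1 - α + α * hockeyStick α⁻¹ Q P := by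
  set μ := P + Q with hμ
  have hQP : Q + P = μ := by rw [hμ, add_comm]
  set p : Ω → ℝ := fun ω => (P.rnDeriv μ ω).toReal with hp
  set q : Ω → ℝ := fun ω => (Q.rnDeriv μ ω).toReal with hq
  have hpInt : Integrable p μ := Measure.integrable_toReal_rnDeriv
  have hqInt : Integrable q μ := Measure.integrable_toReal_rnDeriv
  have hdiffInt : Integrable (fun ω => p ω - α * q ω) μ := hpInt.sub (hqInt.const_mul α)
  have hsubInt : Integrable (fun ω => α * q ω - p ω) μ := (hqInt.const_mul α).sub hpInt
  have hmaxInt : Integrable (fun ω => max (α * q ω - p ω) 0) μ :=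
    hsubInt.pos_part
  have hpoint : ∀ ω, max (p ω - α * q ω) 0
      = (p ω - α * q ω) + max (α * q ω - p ω) 0 := by
    intro ω
    rcases le_or_gt (p ω - α * q ω) 0 with h | h
    · rw [max_eq_right h, max_eq_left (by linarith)]; ring
    · rw [max_eq_left h.le, max_eq_right (by linarith)]; ring
  have hPμ : ∫ ω, p ω ∂μ = 1 := by
    rw [hp, Measure.integral_toReal_rnDeriv (absCont_add_right P Q)]
    simp
  have hQμ : ∫ ω, q ω ∂μ = 1 := by
    rw [hq]
    have : Q ≪ μ := by rw [hμ, add_comm]; exact absCont_add_right Q P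
    rw [Measure.integral_toReal_rnDeriv this]
    simp
  have hHS2 : hockeyStick α⁻¹ Q P = ∫ ω, max (q ω - α⁻¹ * p ω) 0 ∂μ := by
    unfold hockeyStick
    rw [hQP]
  calc hockeyStick α P Q = ∫ ω, ((p ω - α * q ω) + max (α * q ω - p ω) 0) ∂μ := by
        unfold hockeyStick
        exact integral_congr_ae (Filter.Eventually.of_forall hpoint)
    _ = (∫ ω, p ω ∂μ - α * ∫ ω, q ω ∂μ) + ∫ ω, max (α * q ω - p ω) 0 ∂μ := by
        rw [integral_add hdiffInt hmaxInt, integral_sub hpInt (hqInt.const_mul α),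
          integral_const_mul]
    _ = 1 - α + α * hockeyStick α⁻¹ Q P := by
        rw [hPμ, hQμ, hHS2, mul_one, ← integral_const_mul]
        congr 1
        refine integral_congr_ae (Filter.Eventually.of_forall fun ω => ?_)
        show (α * q ω - p ω) ⊔ 0 = α * ((q ω - α⁻¹ * p ω) ⊔ 0)
        rw [mul_max_of_nonneg _ _ hα.le, mul_zero, mul_sub, mul_inv_cancel_left₀ hα.ne']

/-- Half-range dominance equivalence for symmetric neighboring relations: for a mechanism `M`
and a symmetric neighboring relation, `(P,Q)` dominates for all orders `α ≥ 1` iff `(Q,P)`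
dominates for all orders `0 < α ≤ 1`. -/
theorem half_range_dominance_equiv
    {𝒟 : Type*} {Ω Ω' : Type*} [MeasurableSpace Ω] [MeasurableSpace Ω']
    (Neighbor : 𝒟 → 𝒟 → Prop) (hsymm : ∀ D D', Neighbor D D' → Neighbor D' D)
    (M : 𝒟 → Measure Ω) (hM : ∀ D, IsProbabilityMeasure (M D))
    (P Q : Measure Ω') [IsProbabilityMeasure P] [IsProbabilityMeasure Q] :
    (∀ α : ℝ, 1 ≤ α → ∀ D D', Neighbor D D' →
        hockeyStick α (M D) (M D') ≤ hockeyStick α P Q)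
    ↔ (∀ α : ℝ, 0 < α → α ≤ 1 → ∀ D D', Neighbor D D' →
        hockeyStick α (M D) (M D') ≤ hockeyStick α Q P) := by
  constructor
  · intro h α hα0 hα1 D D' hN
    haveI := hM D; haveI := hM D'
    have hinv : (1 : ℝ) ≤ α⁻¹ := one_le_inv_iff₀.mpr ⟨hα0, hα1⟩
    have h1 := hockeyStick_inv (M D) (M D') hα0
    have h2 := hockeyStick_inv Q P hα0
    rw [h1, h2]
    have := h α⁻¹ hinv D' D (hsymm D D' hN)
    nlinarith
  · intro h α hα D D' hN
    haveI := hM D; haveI := hM D'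
    have hα0 : (0 : ℝ) < α := lt_of_lt_of_le one_pos hα
    have hinv0 : (0 : ℝ) < α⁻¹ := inv_pos.mpr hα0
    have hinv1 : α⁻¹ ≤ 1 := inv_le_one_of_one_le₀ hα
    have h1 := hockeyStick_inv (M D) (M D') hα0
    have h2 := hockeyStick_inv P Q hα0
    rw [h1, h2]
    have := h α⁻¹ hinv0 hinv1 D' D (hsymm D D' hN)
    nlinarith
end

section
/- Subsampling divergence identity: for probability measures P, Q on a common measurable space, every γ ∈ (0,1], and every ε ≥ 0, the hockey-stick divergence of the subsampled mixture satisfies H_{e^ε}((1−γ)Q + γP ‖ Q) = γ · H_{1 + (e^ε − 1)/γ}(P‖Q). -/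
open MeasureTheory
open scoped ENNReal

/-- Subsampling divergence identity: for `γ ∈ (0,1]` and `ε ≥ 0`,
`H_{e^ε}((1−γ)Q + γP ‖ Q) = γ · H_{1 + (e^ε − 1)/γ}(P‖Q)`. -/
theorem subsampling_divergence_identity
    {Ω : Type*} [MeasurableSpace Ω]
    (P Q : Measure Ω) [IsProbabilityMeasure P] [IsProbabilityMeasure Q]
    (γ : ℝ) (hγ0 : 0 < γ) (hγ1 : γ ≤ 1) (ε : ℝ) (hε : 0 ≤ ε) :
    hockeyStick (Real.exp ε) (ENNReal.ofReal (1 - γ) • Q + ENNReal.ofReal γ • P) Q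
      = γ * hockeyStick (1 + (Real.exp ε - 1) / γ) P Q := by
  set α' : ℝ := 1 + (Real.exp ε - 1) / γ with hα'
  set c1 : ℝ≥0∞ := ENNReal.ofReal (1 - γ) with hc1
  set c2 : ℝ≥0∞ := ENNReal.ofReal γ with hc2
  set M : Measure Ω := c1 • Q + c2 • P with hMdef
  have hc1ne : c1 ≠ ∞ := ENNReal.ofReal_ne_top
  have hc2ne : c2 ≠ ∞ := ENNReal.ofReal_ne_top
  have hc2zero : c2 ≠ 0 := by
    simp only [hc2, ne_eq, ENNReal.ofReal_eq_zero, not_le]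
    exact hγ0
  haveI hf1 : IsFiniteMeasure (c1 • Q) :=
    ⟨by rw [Measure.smul_apply, smul_eq_mul]
        exact ENNReal.mul_lt_top hc1ne.lt_top (measure_lt_top _ _)⟩
  haveI hf2 : IsFiniteMeasure (c2 • P) :=
    ⟨by rw [Measure.smul_apply, smul_eq_mul]
        exact ENNReal.mul_lt_top hc2ne.lt_top (measure_lt_top _ _)⟩
  haveI hfM : IsFiniteMeasure M := by rw [hMdef]; infer_instance
  set ν : Measure Ω := M + Q with hνdef
  set μ : Measure Ω := P + Q with hμdef
  haveI : IsFiniteMeasure ν := by rw [hνdef]; infer_instance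
  haveI : IsFiniteMeasure μ := by rw [hμdef]; infer_instance
  -- absolute continuity facts
  have hPν : P ≪ ν := by
    refine (Measure.absolutelyContinuous_smul hc2zero).trans
      (Measure.absolutelyContinuous_of_le ?_)
    calc c2 • P ≤ M := hMdef ▸ Measure.le_add_left le_rfl
    _ ≤ ν := hνdef ▸ le_add_of_nonneg_right bot_le
  have hQν : Q ≪ ν := Measure.absolutelyContinuous_of_le (Measure.le_add_left le_rfl)
  have hμν : μ ≪ ν := Measure.AbsolutelyContinuous.add_left hPν hQν
  have hνμ : ν ≪ μ := by
    refine Measure.AbsolutelyContinuous.add_left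
      (Measure.AbsolutelyContinuous.add_left ?_ ?_) ?_
    · exact Measure.smul_absolutelyContinuous.trans
        (Measure.absolutelyContinuous_of_le (Measure.le_add_left le_rfl))
    · exact Measure.smul_absolutelyContinuous.trans
        (Measure.absolutelyContinuous_of_le (Measure.le_add_right le_rfl))
    · exact Measure.absolutelyContinuous_of_le (Measure.le_add_left le_rfl)
  -- Step 1: rewrite the integrand over ν
  have key1 : ∫ ω, max ((M.rnDeriv ν ω).toReal - Real.exp ε * (Q.rnDeriv ν ω).toReal) 0 ∂ν
      = ∫ ω, γ * max ((P.rnDeriv ν ω).toReal - α' * (Q.rnDeriv ν ω).toReal) 0 ∂ν := by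
    refine integral_congr_ae ?_
    filter_upwards [Measure.rnDeriv_add (c1 • Q) (c2 • P) ν,
      Measure.rnDeriv_smul_left_of_ne_top Q ν hc1ne,
      Measure.rnDeriv_smul_left_of_ne_top P ν hc2ne,
      Measure.rnDeriv_lt_top P ν, Measure.rnDeriv_lt_top Q ν] with ω h1 h2 h3 hPlt hQlt
    have hM : M.rnDeriv ν ω = c1 * Q.rnDeriv ν ω + c2 * P.rnDeriv ν ω := by
      rw [hMdef, h1, Pi.add_apply, h2, h3]; simp [smul_eq_mul]
    have hc1q : c1 * Q.rnDeriv ν ω ≠ ∞ := ENNReal.mul_ne_top hc1ne hQlt.ne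
    have hc2p : c2 * P.rnDeriv ν ω ≠ ∞ := ENNReal.mul_ne_top hc2ne hPlt.ne
    rw [hM, ENNReal.toReal_add hc1q hc2p, ENNReal.toReal_mul, ENNReal.toReal_mul,
      hc1, hc2, ENNReal.toReal_ofReal (by linarith), ENNReal.toReal_ofReal hγ0.le,
      mul_max_of_nonneg _ _ hγ0.le, mul_zero]
    congr 1
    have : γ * ((P.rnDeriv ν ω).toReal - α' * (Q.rnDeriv ν ω).toReal)
        = γ * (P.rnDeriv ν ω).toReal - (γ + Real.exp ε - 1) * (Q.rnDeriv ν ω).toReal := by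
      rw [hα']; field_simp; ring
    rw [this]; ring
  -- Step 2: change the base measure from ν to μ
  have key2 : ∫ ω, max ((P.rnDeriv ν ω).toReal - α' * (Q.rnDeriv ν ω).toReal) 0 ∂ν
      = ∫ ω, max ((P.rnDeriv μ ω).toReal - α' * (Q.rnDeriv μ ω).toReal) 0 ∂μ := by
    rw [← integral_rnDeriv_smul hνμ
      (f := fun ω => max ((P.rnDeriv ν ω).toReal - α' * (Q.rnDeriv ν ω).toReal) 0)]
    refine integral_congr_ae ?_
    filter_upwards [Measure.rnDeriv_mul_rnDeriv hPν (κ := μ),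
      Measure.rnDeriv_mul_rnDeriv hQν (κ := μ),
      Measure.rnDeriv_lt_top ν μ,
      Filter.Eventually.filter_mono hμν.ae_le (Measure.rnDeriv_lt_top P ν),
      Filter.Eventually.filter_mono hμν.ae_le (Measure.rnDeriv_lt_top Q ν)]
      with ω hP hQ hwlt hPlt hQlt
    rw [smul_eq_mul, ← hP, ← hQ, Pi.mul_apply, Pi.mul_apply, ENNReal.toReal_mul,
      ENNReal.toReal_mul, mul_max_of_nonneg _ _ ENNReal.toReal_nonneg, mul_zero]
    congr 1
    ring
  -- Conclude
  show (∫ ω, max ((M.rnDeriv ν ω).toReal - Real.exp ε * (Q.rnDeriv ν ω).toReal) 0 ∂ν)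
      = γ * ∫ ω, max ((P.rnDeriv μ ω).toReal - α' * (Q.rnDeriv μ ω).toReal) 0 ∂μ
  rw [key1, ← key2, integral_const_mul]
end

section
/- Characteristic function of the privacy loss of the Gaussian mechanism: let σ > 0, let P be the Gaussian distribution on ℝ with mean 1 and variance σ², and Q the Gaussian distribution on ℝ with mean 0 and variance σ². The log density ratio is log(p(x)/q(x)) = (2x − 1)/(2σ²), where p and q are the Lebesgue densities of P and Q. Then for every t ∈ ℝ, ∫_ℝ exp(i·t·(2x−1)/(2σ²)) dP(x) = exp(−(t² − i·t)/(2σ²)); the same formula holds for ∫_ℝ exp(i·t·(1−2x)/(2σ²)) dQ(x). -/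
open MeasureTheory ProbabilityTheory Real Complex
open scoped NNReal

/-! The privacy loss is an affine function of `x`, so under either Gaussian it is again Gaussian,
with mean `1/(2σ²)` and variance `1/σ²`; its characteristic function is that of this Gaussian. -/

namespace ProbabilityTheory

lemma gaussianReal_map_const_mul_add_const (μ : ℝ) (v : ℝ≥0) (a b : ℝ) :
    (gaussianReal μ v).map (fun x ↦ a * x + b)
      = gaussianReal (a * μ + b) (.mk (a ^ 2) (sq_nonneg _) * v) := by
  rw [show (fun x ↦ a * x + b) = (· + b) ∘ (a * ·) from rfl,
    ← Measure.map_map (by fun_prop) (by fun_prop), gaussianReal_map_const_mul,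
    gaussianReal_map_add_const]

lemma integral_cexp_I_mul_eq_charFun_map {μ : Measure ℝ} {f : ℝ → ℝ} (hf : Measurable f)
    (t : ℝ) : ∫ x, cexp (I * t * f x) ∂μ = charFun (μ.map f) t := by
  rw [charFun_apply_real, integral_map hf.aemeasurable (by fun_prop)]
  simp_rw [mul_comm I, mul_right_comm _ I]

lemma gaussianReal_map_privacyLoss (v : ℝ≥0) :
    (gaussianReal 1 v).map (fun x : ℝ ↦ (2 * x - 1) / (2 * v))
      = gaussianReal (1 / (2 * v)) v⁻¹ := by
  convert gaussianReal_map_const_mul_add_const 1 v (v : ℝ)⁻¹ (-1 / (2 * v)) using 2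
  · ext x; ring
  · ring
  · ext
    simp only [NNReal.coe_inv, NNReal.coe_mul, NNReal.coe_mk]
    simpa [sq] using (mul_self_mul_inv (v : ℝ)⁻¹).symm

lemma gaussianReal_map_privacyLoss_symm (v : ℝ≥0) :
    (gaussianReal 0 v).map (fun x : ℝ ↦ (1 - 2 * x) / (2 * v))
      = gaussianReal (1 / (2 * v)) v⁻¹ := by
  convert gaussianReal_map_const_mul_add_const 0 v (-(v : ℝ)⁻¹) (1 / (2 * v)) using 2
  · ext x; ring
  · ring
  · ext
    simp only [NNReal.coe_inv, NNReal.coe_mul, NNReal.coe_mk, neg_sq]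
    simpa [sq] using (mul_self_mul_inv (v : ℝ)⁻¹).symm

lemma charFun_gaussianReal_privacyLoss (v : ℝ≥0) (t : ℝ) :
    charFun (gaussianReal (1 / (2 * v)) v⁻¹) t = cexp (-((t ^ 2 - I * t) / (2 * (v : ℝ)))) := by
  rw [charFun_gaussianReal]
  congr 1
  push_cast
  ring

lemma integral_cexp_I_mul_privacyLoss (v : ℝ≥0) (t : ℝ) :
    ∫ x, cexp (I * t * ((2 * x - 1) / (2 * v) : ℝ)) ∂gaussianReal 1 v
      = cexp (-((t ^ 2 - I * t) / (2 * (v : ℝ)))) := by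
  rw [integral_cexp_I_mul_eq_charFun_map (by fun_prop), gaussianReal_map_privacyLoss,
    charFun_gaussianReal_privacyLoss]

lemma integral_cexp_I_mul_privacyLoss_symm (v : ℝ≥0) (t : ℝ) :
    ∫ x, cexp (I * t * ((1 - 2 * x) / (2 * v) : ℝ)) ∂gaussianReal 0 v
      = cexp (-((t ^ 2 - I * t) / (2 * (v : ℝ)))) := by
  rw [integral_cexp_I_mul_eq_charFun_map (by fun_prop), gaussianReal_map_privacyLoss_symm,
    charFun_gaussianReal_privacyLoss]

end ProbabilityTheory

lemma log_mul_exp_div_mul_exp {c : ℝ} (hc : c ≠ 0) (a b : ℝ) :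
    Real.log (c * Real.exp a / (c * Real.exp b)) = a - b := by
  rw [mul_div_mul_left _ _ hc, ← Real.exp_sub, Real.log_exp]

/-- Characteristic function of the privacy loss of the Gaussian mechanism: for `P = N(1,σ²)`
and `Q = N(0,σ²)`, the log density ratio is `(2x−1)/(2σ²)`, and its characteristic function
under `P` (and the one of the reversed loss `(1−2x)/(2σ²)` under `Q`) equals
`exp(−(t² − i·t)/(2σ²))`. -/
theorem gaussian_privacy_loss_charFun (σ : ℝ) (hσ : 0 < σ) :
    (∀ x : ℝ,
      Real.log ((1 / Real.sqrt (2 * π * σ ^ 2) * Real.exp (-(x - 1) ^ 2 / (2 * σ ^ 2)))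
          / (1 / Real.sqrt (2 * π * σ ^ 2) * Real.exp (-x ^ 2 / (2 * σ ^ 2))))
        = (2 * x - 1) / (2 * σ ^ 2))
    ∧ (∀ t : ℝ,
      ∫ x : ℝ, Complex.exp (Complex.I * t * (((2 * x - 1) / (2 * σ ^ 2) : ℝ) : ℂ))
          ∂(gaussianReal 1 ⟨σ ^ 2, sq_nonneg σ⟩)
        = Complex.exp (-(((t : ℂ) ^ 2 - Complex.I * t) / (2 * (σ : ℂ) ^ 2))))
    ∧ (∀ t : ℝ,
      ∫ x : ℝ, Complex.exp (Complex.I * t * (((1 - 2 * x) / (2 * σ ^ 2) : ℝ) : ℂ))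
          ∂(gaussianReal 0 ⟨σ ^ 2, sq_nonneg σ⟩)
        = Complex.exp (-(((t : ℂ) ^ 2 - Complex.I * t) / (2 * (σ : ℂ) ^ 2)))) := by
  refine ⟨fun x ↦ ?_, fun t ↦ ?_, fun t ↦ ?_⟩
  · rw [log_mul_exp_div_mul_exp (by positivity)]
    field_simp
    ring
  · rw [← Complex.ofReal_pow σ]
    exact integral_cexp_I_mul_privacyLoss _ t
  · rw [← Complex.ofReal_pow σ]
    exact integral_cexp_I_mul_privacyLoss_symm _ t
end
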